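/- arXiv:2408.17414 — 8 statements merged into one kernel-verified Lean document; each statement's English description precedes it below -/
import Mathlib

section
/- Let A be a real m×n matrix, let Ω be an n×k random matrix whose entries are i.i.d. standard Gaussian N(0,1) random variables, and let p ≤ k be a positive integer. For any p-cycle τ = (i_1, …, i_p) consisting of p distinct indices in {1, …, k}, the expectation of the cycle product (Ω^T A^T A Ω)_τ = ∏_{ℓ=1}^{p} (Ω^T A^T A Ω)_{i_ℓ, i_{ℓ+1}} (with the convention i_{p+1} ≡ i_1) equals trace((A^T A)^p), which equals ‖A‖_{2p}^{2p}, the 2p-th power of the Schatten-2p norm of A. -/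
/-!
Write `W` for the random matrix and `B = AᵀA`. Expanding the cycle product multilinearly, and
shifting the second summation index so that the two entries of `W` taken from column `τ ℓ` sit in
the same factor, gives a sum of terms
`(∏ ℓ, B (u ℓ) (v (ℓ + 1))) * ∏ ℓ, W (u ℓ) (τ ℓ) * W (v ℓ) (τ ℓ)`.
The columns `τ ℓ` are distinct, so the factors of the second product are independent, and
`E[W a c * W b c] = δ_ab`; hence only the terms with `u = v` survive, and
`∑ u, ∏ ℓ, B (u ℓ) (u (ℓ + 1))` is the sum over closed walks of length `p`, i.e. `trace (B ^ p)`.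
-/

open MeasureTheory ProbabilityTheory Matrix

namespace Matrix

variable {n R : Type*}

def cycleProd [CommMonoid R] {κ : Type*} {p : ℕ} [NeZero p] (M : Matrix κ κ R) (τ : Fin p → κ) :
    R :=
  ∏ ℓ, M (τ ℓ) (τ (ℓ + 1))

variable [CommSemiring R] [Fintype n]

theorem cycleProd_transpose_mul_mul {κ : Type*} {p : ℕ} [NeZero p]
    (W : Matrix n κ R) (B : Matrix n n R) (τ : Fin p → κ) :
    (Wᵀ * B * W).cycleProd τ = ∑ u : Fin p → n, ∑ v : Fin p → n,
      (∏ ℓ, B (u ℓ) (v (ℓ + 1))) * ∏ ℓ, W (u ℓ) (τ ℓ) * W (v ℓ) (τ ℓ) := by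
  have entry : ∀ i j, (Wᵀ * B * W) i j = ∑ a, ∑ b, W a i * B a b * W b j := by
    intro i j
    simp only [mul_apply, transpose_apply, Finset.sum_mul]
    exact Finset.sum_comm
  simp only [cycleProd, entry, Fintype.prod_sum]
  refine Fintype.sum_congr _ _ fun u => ?_
  -- substitute `v ∘ (· + 1)` for the second index
  refine Fintype.sum_equiv (Equiv.arrowCongr (Equiv.addRight 1) (Equiv.refl n)) _ _ fun v => ?_
  have shift : ∏ ℓ, W (v ℓ) (τ (ℓ + 1)) = ∏ ℓ, W (v (ℓ - 1)) (τ ℓ) := by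
    simpa using (Equiv.prod_comp (Equiv.addRight (1 : Fin p)) fun ℓ => W (v (ℓ - 1)) (τ ℓ))
  simp only [Finset.prod_mul_distrib, shift, Equiv.arrowCongr_apply, Function.comp_apply,
    Equiv.refl_apply, Equiv.addRight_symm_apply, ← sub_eq_add_neg, add_sub_cancel_right]
  ring

variable [DecidableEq n]

theorem trace_pow_mul_eq_sum (B C : Matrix n n R) (q : ℕ) :
    trace (B ^ q * C) = ∑ u : Fin (q + 1) → n,
      (∏ ℓ : Fin q, B (u ℓ.castSucc) (u ℓ.succ)) * C (u (Fin.last q)) (u 0) := by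
  induction q generalizing C with
  | zero =>
    simp only [pow_zero, one_mul, Finset.univ_eq_empty, Finset.prod_empty, one_mul]
    exact (Fintype.sum_equiv (Equiv.funUnique (Fin 1) n) _ _ fun u => rfl).symm
  | succ q ih =>
    rw [pow_succ, Matrix.mul_assoc, ih]
    conv_rhs => rw [← (Fin.snocEquiv fun _ => n).sum_comp, Fintype.sum_prod_type_right]
    refine Fintype.sum_congr _ _ fun u => ?_
    simp [Fin.prod_univ_castSucc, Matrix.mul_apply, Finset.mul_sum, mul_assoc, Fin.snocEquiv,
      Fin.succ_castSucc, -Fin.castSucc_succ]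

theorem trace_pow_eq_sum_cycleProd {p : ℕ} [NeZero p] (B : Matrix n n R) :
    trace (B ^ p) = ∑ u : Fin p → n, B.cycleProd u := by
  obtain ⟨q, rfl⟩ := Nat.exists_eq_succ_of_ne_zero (NeZero.ne p)
  rw [pow_succ, trace_pow_mul_eq_sum]
  refine Fintype.sum_congr _ _ fun u => ?_
  simp [cycleProd, Fin.prod_univ_castSucc, Fin.coeSucc_eq_succ]

end Matrix

namespace ProbabilityTheory

variable {Ω : Type*} [MeasurableSpace Ω] {P : Measure Ω}

lemma iIndepFun.curry {ι κ 𝓧 : Type*} [MeasurableSpace 𝓧] {X : ι → κ → Ω → 𝓧}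
    (mX : ∀ i j, Measurable (X i j)) (h : iIndepFun (fun q : ι × κ => X q.1 q.2) P) :
    iIndepFun (fun i ω j => X i j ω) P := by
  -- the joint law is a product measure, and currying a product measure gives a product of
  -- product measures
  have := h.isProbabilityMeasure
  have (i : ι) (j : κ) : IsProbabilityMeasure (P.map (X i j)) :=
    Measure.isProbabilityMeasure_map (mX i j).aemeasurable
  rw [iIndepFun_iff_map_fun_eq_infinitePi_map fun i => measurable_pi_lambda _ (mX i)]
  have hrow (i : ι) : P.map (fun ω j => X i j ω) = Measure.infinitePi fun j => P.map (X i j) :=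
    (h.precomp (Prod.mk_right_injective i)).map_fun_eq_infinitePi_map fun j => mX i j
  have hall : P.map (fun ω (q : ι × κ) => X q.1 q.2 ω) =
      Measure.infinitePi fun q => P.map (X q.1 q.2) :=
    h.map_fun_eq_infinitePi_map fun q => mX q.1 q.2
  simp_rw [hrow]
  rw [← Measure.infinitePi_map_curry, ← hall, Measure.map_map (by fun_prop) (by fun_prop)]
  rfl

lemma iIndepFun.integrable_fun_prod_comp {ι : Type*} [Fintype ι] {𝓧 : ι → Type*}
    [∀ i, MeasurableSpace (𝓧 i)] {X : ∀ i, Ω → 𝓧 i} {f : ∀ i, 𝓧 i → ℝ}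
    (hX : iIndepFun X P) (mX : ∀ i, AEMeasurable (X i) P)
    (hf : ∀ i, Integrable (f i) (P.map (X i))) :
    Integrable (fun ω => ∏ i, f i (X i ω)) P := by
  have := hX.isProbabilityMeasure
  have hprod : Integrable (fun x : ∀ i, 𝓧 i => ∏ i, f i (x i)) (P.map fun ω i => X i ω) := by
    rw [hX.map_fun_eq_pi_map mX]
    exact Integrable.fintype_prod_dep hf
  exact hprod.comp_aemeasurable (aemeasurable_pi_lambda _ mX)

section IndependentEntries

variable {ι κ : Type*} {W : ι → κ → Ω → ℝ}

lemma iIndepFun_columns_of_injective (mW : ∀ t c, Measurable (W t c))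
    (hW : iIndepFun (fun q : ι × κ => W q.1 q.2) P) {J : Type*} {τ : J → κ}
    (hτ : τ.Injective) : iIndepFun (fun j ω t => W t (τ j) ω) P :=
  ((hW.precomp (Equiv.prodComm κ ι).injective).curry (X := fun c t => W t c)
    fun c t => mW t c).precomp hτ

lemma integral_entry_mul_entry_eq_ite [DecidableEq ι] (mW : ∀ t c, Measurable (W t c))
    (hW : iIndepFun (fun q : ι × κ => W q.1 q.2) P)
    (hmean : ∀ t c, ∫ ω, W t c ω ∂P = 0) (hsq : ∀ t c, ∫ ω, W t c ω ^ 2 ∂P = 1)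
    (a b : ι) (c : κ) : ∫ ω, W a c ω * W b c ω ∂P = if a = b then 1 else 0 := by
  split_ifs with hab
  · subst hab
    simpa only [sq] using hsq a c
  · have hne : (a, c) ≠ (b, c) := by simp [hab]
    rw [(hW.indepFun hne).integral_fun_mul_eq_mul_integral (mW a c).aestronglyMeasurable
      (mW b c).aestronglyMeasurable, hmean, zero_mul]

variable {J : Type*} [Fintype J] {τ : J → κ}

lemma integral_prod_entry_mul_entry_eq_ite [DecidableEq ι] (mW : ∀ t c, Measurable (W t c))
    (hW : iIndepFun (fun q : ι × κ => W q.1 q.2) P)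
    (hmean : ∀ t c, ∫ ω, W t c ω ∂P = 0) (hsq : ∀ t c, ∫ ω, W t c ω ^ 2 ∂P = 1)
    (hτ : τ.Injective) (u v : J → ι) :
    ∫ ω, ∏ j, W (u j) (τ j) ω * W (v j) (τ j) ω ∂P = if u = v then 1 else 0 := by
  rw [(iIndepFun_columns_of_injective mW hW hτ).integral_fun_prod_comp
    (f := fun j (w : ι → ℝ) => w (u j) * w (v j))
    (fun j => (measurable_pi_lambda _ fun t => mW t (τ j)).aemeasurable)
    (fun j => by fun_prop)]
  simp only [integral_entry_mul_entry_eq_ite mW hW hmean hsq, Finset.prod_boole, Finset.mem_univ,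
    forall_const, funext_iff]

lemma integrable_prod_entry_mul_entry (mW : ∀ t c, Measurable (W t c))
    (hW : iIndepFun (fun q : ι × κ => W q.1 q.2) P) (hL2 : ∀ t c, MemLp (W t c) 2 P)
    (hτ : τ.Injective) (u v : J → ι) :
    Integrable (fun ω => ∏ j, W (u j) (τ j) ω * W (v j) (τ j) ω) P := by
  have mcol (j : J) : Measurable fun ω t => W t (τ j) ω :=
    measurable_pi_lambda _ fun t => mW t (τ j)
  refine (iIndepFun_columns_of_injective mW hW hτ).integrable_fun_prod_comp
    (f := fun j (w : ι → ℝ) => w (u j) * w (v j)) (fun j => (mcol j).aemeasurable) fun j => ?_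
  rw [integrable_map_measure (by fun_prop) (mcol j).aemeasurable]
  exact (hL2 (u j) (τ j)).integrable_mul (hL2 (v j) (τ j))

theorem integral_cycleProd_transpose_mul_mul [Fintype ι] [DecidableEq ι] {p : ℕ} [NeZero p]
    (mW : ∀ t c, Measurable (W t c)) (hW : iIndepFun (fun q : ι × κ => W q.1 q.2) P)
    (hL2 : ∀ t c, MemLp (W t c) 2 P)
    (hmean : ∀ t c, ∫ ω, W t c ω ∂P = 0) (hsq : ∀ t c, ∫ ω, W t c ω ^ 2 ∂P = 1)
    (B : Matrix ι ι ℝ) {τ : Fin p → κ} (hτ : τ.Injective) :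
    ∫ ω, ((of fun t c => W t c ω)ᵀ * B * of fun t c => W t c ω).cycleProd τ ∂P
      = trace (B ^ p) := by
  have hint (u v : Fin p → ι) : Integrable (fun ω =>
      (∏ ℓ, B (u ℓ) (v (ℓ + 1))) * ∏ ℓ, W (u ℓ) (τ ℓ) ω * W (v ℓ) (τ ℓ) ω) P :=
    (integrable_prod_entry_mul_entry mW hW hL2 hτ u v).const_mul _
  have hterm (u v : Fin p → ι) :
      ∫ ω, (∏ ℓ, B (u ℓ) (v (ℓ + 1))) * ∏ ℓ, W (u ℓ) (τ ℓ) ω * W (v ℓ) (τ ℓ) ω ∂P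
        = if u = v then B.cycleProd u else 0 := by
    rw [integral_const_mul, integral_prod_entry_mul_entry_eq_ite mW hW hmean hsq hτ]
    split_ifs with huv
    · rw [huv, mul_one, cycleProd]
    · exact mul_zero _
  simp only [cycleProd_transpose_mul_mul, of_apply]
  rw [integral_finsetSum _ fun u _ => integrable_finsetSum _ fun v _ => hint u v,
    trace_pow_eq_sum_cycleProd]
  refine Fintype.sum_congr _ _ fun u => ?_
  rw [integral_finsetSum _ fun v _ => hint u v]
  simp only [hterm, Finset.sum_ite_eq, Finset.mem_univ, if_true]

end IndependentEntries

end ProbabilityTheory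

theorem stmt0_general {m n k p : ℕ} [NeZero p]
    (A : Matrix (Fin m) (Fin n) ℝ)
    {Ω : Type} [MeasureSpace Ω]
    (ω : Fin n → Fin k → Ω → ℝ)
    (hmeas : ∀ t i, Measurable (ω t i))
    (hgauss : ∀ t i, Measure.map (ω t i) ℙ = gaussianReal 0 1)
    (hindep : iIndepFun
      (fun ti : Fin n × Fin k => ω ti.1 ti.2) ℙ)
    (τ : Fin p → Fin k) (hτ : Function.Injective τ) :
    (∫ x, ∏ ℓ : Fin p,
        ((Matrix.of (fun t i => ω t i x))ᵀ * Aᵀ * A * (Matrix.of (fun t i => ω t i x)))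
          (τ ℓ) (τ (ℓ + 1)) ∂ℙ)
      = Matrix.trace ((Aᵀ * A) ^ p) := by
  have hlaw (t i) : HasLaw (ω t i) (gaussianReal 0 1) ℙ := ⟨(hmeas t i).aemeasurable, hgauss t i⟩
  have hmean (t i) : ∫ x, ω t i x ∂ℙ = 0 := (hlaw t i).integral_eq.trans integral_id_gaussianReal
  have hsq (t i) : ∫ x, ω t i x ^ 2 ∂ℙ = 1 := by
    rw [← variance_of_integral_eq_zero (hmeas t i).aemeasurable (hmean t i),
      (hlaw t i).variance_eq, variance_id_gaussianReal, NNReal.coe_one]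
  have h := integral_cycleProd_transpose_mul_mul hmeas hindep
    (fun t i => (hlaw t i).hasGaussianLaw.memLp_two) hmean hsq (Aᵀ * A) hτ
  simpa only [Matrix.cycleProd, ← Matrix.mul_assoc] using h

/-- For a real `m × n` matrix `A`, an `n × k` random matrix `Ω` with
i.i.d. standard Gaussian entries, and any `p`-cycle `τ` of distinct indices in `Fin k`
(with `p ≤ k`), the expectation of the cycle product `(Ωᵀ Aᵀ A Ω)_τ` equals
`trace((Aᵀ A)^p)`, the `2p`-th power of the Schatten-`2p` norm of `A`. -/
theorem stmt0 {m n k p : ℕ} [NeZero p] (hpk : p ≤ k)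
    (A : Matrix (Fin m) (Fin n) ℝ)
    {Ω : Type} [MeasureSpace Ω] [IsProbabilityMeasure (ℙ : Measure Ω)]
    (ω : Fin n → Fin k → Ω → ℝ)
    (hmeas : ∀ t i, Measurable (ω t i))
    (hgauss : ∀ t i, Measure.map (ω t i) ℙ = gaussianReal 0 1)
    (hindep : iIndepFun
      (fun ti : Fin n × Fin k => ω ti.1 ti.2) ℙ)
    (τ : Fin p → Fin k) (hτ : Function.Injective τ) :
    (∫ x, ∏ ℓ : Fin p,
        ((Matrix.of (fun t i => ω t i x))ᵀ * Aᵀ * A * (Matrix.of (fun t i => ω t i x)))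
          (τ ℓ) (τ (ℓ + 1)) ∂ℙ)
      = Matrix.trace ((Aᵀ * A) ^ p) :=
  stmt0_general A ω hmeas hgauss hindep τ hτ
end

section
/- Let Z be any real k×k matrix, let p ≤ k be a positive integer, and let T be the strictly upper triangular part of Z (i.e., T_{ij} = Z_{ij} if i < j and T_{ij} = 0 otherwise). Then Σ_{1 ≤ i_1 < i_2 < … < i_p ≤ k} ∏_{ℓ=1}^{p} Z_{i_ℓ, i_{ℓ+1}} = trace(T^{p-1} Z), where the convention i_{p+1} ≡ i_1 is used in the product. -/
open Matrix

private lemma collapse {α : Type*} [Fintype α] [DecidableEq α] (b : α) (q : Prop)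
    [Decidable q] (v : α → ℝ) :
    (∑ a : α, if q ∧ b = a then v a else 0) = if q then v b else 0 := by
  by_cases hq : q <;> simp [hq]

private lemma chain {k : ℕ} (Z T : Matrix (Fin k) (Fin k) ℝ)
    (hT : ∀ i j, T i j = if i < j then Z i j else 0) :
    ∀ (m : ℕ) (i j : Fin k), (T ^ m) i j =
      ∑ f : Fin (m + 1) → Fin k,
        if StrictMono f ∧ f 0 = i ∧ f (Fin.last m) = j
        then ∏ ℓ : Fin m, Z (f ℓ.castSucc) (f ℓ.succ) else 0 := by
  intro m
  induction m with
  | zero =>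
    intro i j
    rw [pow_zero]
    rw [Fintype.sum_equiv (Equiv.funUnique (Fin 1) (Fin k))
      _ (fun a => if a = i ∧ a = j then (1 : ℝ) else 0)
      (fun f => by
        simp only [Equiv.funUnique_apply]
        have : StrictMono f := Subsingleton.strictMono f
        simp [this, Fin.last])]
    by_cases h : i = j
    · subst h; simp [Matrix.one_apply]
    · rw [Matrix.one_apply_ne h]
      exact (Finset.sum_eq_zero fun a _ => if_neg (by rintro ⟨rfl, rfl⟩; exact h rfl)).symm
  | succ m ih =>
    intro i j
    rw [pow_succ', Matrix.mul_apply]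
    rw [← (Fin.consEquiv (fun _ : Fin (m + 2) => Fin k)).sum_comp]
    rw [Fintype.sum_prod_type]
    -- RHS now: ∑ a, ∑ g, F (Fin.cons a g)
    have hcons : ∀ (a : Fin k) (g : Fin (m + 1) → Fin k),
        (if StrictMono (Fin.cons a g : Fin (m+2) → Fin k) ∧
            (Fin.cons a g : Fin (m+2) → Fin k) 0 = i ∧
            (Fin.cons a g : Fin (m+2) → Fin k) (Fin.last (m+1)) = j
         then ∏ ℓ : Fin (m+1), Z ((Fin.cons a g : Fin (m+2) → Fin k) ℓ.castSucc)
            ((Fin.cons a g : Fin (m+2) → Fin k) ℓ.succ) else 0)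
        = if ((a < g 0 ∧ StrictMono g) ∧ g (Fin.last m) = j) ∧ a = i
          then Z a (g 0) * ∏ ℓ : Fin m, Z (g ℓ.castSucc) (g ℓ.succ) else 0 := by
      intro a g
      have hsm : StrictMono (Fin.cons a g : Fin (m+2) → Fin k) ↔ a < g 0 ∧ StrictMono g := by
        rw [Fin.strictMono_iff_lt_succ, Fin.strictMono_iff_lt_succ, Fin.forall_fin_succ]
        simp only [← Fin.succ_castSucc, Fin.cons_succ, Fin.castSucc_zero, Fin.cons_zero]
      have hlast : (Fin.cons a g : Fin (m+2) → Fin k) (Fin.last (m+1)) = g (Fin.last m) := by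
        rw [← Fin.succ_last, Fin.cons_succ]
      have hprod : (∏ ℓ : Fin (m+1), Z ((Fin.cons a g : Fin (m+2) → Fin k) ℓ.castSucc)
          ((Fin.cons a g : Fin (m+2) → Fin k) ℓ.succ))
          = Z a (g 0) * ∏ ℓ : Fin m, Z (g ℓ.castSucc) (g ℓ.succ) := by
        rw [Fin.prod_univ_succ]
        have h0 : Z ((Fin.cons a g : Fin (m+2) → Fin k) ((0 : Fin (m+1)).castSucc))
            ((Fin.cons a g : Fin (m+2) → Fin k) ((0 : Fin (m+1)).succ)) = Z a (g 0) := by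
          simp
        rw [h0]; congr 1
      rw [hlast, hprod, Fin.cons_zero]
      exact if_congr (by tauto) rfl rfl
    calc (∑ a, T i a * (T ^ m) a j)
        = ∑ a, ∑ g : Fin (m + 1) → Fin k,
            if (i < a ∧ (StrictMono g ∧ g (Fin.last m) = j)) ∧ a = g 0
            then Z i a * ∏ ℓ : Fin m, Z (g ℓ.castSucc) (g ℓ.succ) else 0 := by
          refine Finset.sum_congr rfl fun a _ => ?_
          rw [ih, hT, Finset.mul_sum]
          refine Finset.sum_congr rfl fun g _ => ?_
          rw [ite_zero_mul_ite_zero]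
          exact if_congr (by constructor <;> rintro ⟨h1, h2, h3⟩ <;> tauto) rfl rfl
      _ = ∑ g : Fin (m + 1) → Fin k, ∑ a,
            if ((i < g 0 ∧ (StrictMono g ∧ g (Fin.last m) = j)) ∧ g 0 = a)
            then Z i a * ∏ ℓ : Fin m, Z (g ℓ.castSucc) (g ℓ.succ) else 0 := by
          rw [Finset.sum_comm]
          refine Finset.sum_congr rfl fun g _ => Finset.sum_congr rfl fun a _ => ?_
          refine if_congr ?_ rfl rfl
          constructor
          · rintro ⟨⟨h1, h2⟩, h3⟩; exact ⟨⟨h3 ▸ h1, h2⟩, h3.symm⟩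
          · rintro ⟨⟨h1, h2⟩, h3⟩; exact ⟨⟨h3 ▸ h1, h2⟩, h3.symm⟩
      _ = ∑ g : Fin (m + 1) → Fin k,
            if i < g 0 ∧ (StrictMono g ∧ g (Fin.last m) = j)
            then Z i (g 0) * ∏ ℓ : Fin m, Z (g ℓ.castSucc) (g ℓ.succ) else 0 := by
          refine Finset.sum_congr rfl fun g _ => ?_
          exact collapse (g 0) _ _
      _ = ∑ a, ∑ g : Fin (m + 1) → Fin k,
            if ((a < g 0 ∧ StrictMono g) ∧ g (Fin.last m) = j) ∧ a = i
            then Z a (g 0) * ∏ ℓ : Fin m, Z (g ℓ.castSucc) (g ℓ.succ) else 0 := by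
          rw [Finset.sum_comm]
          refine Finset.sum_congr rfl fun g _ => ?_
          rw [show (∑ a, if ((a < g 0 ∧ StrictMono g) ∧ g (Fin.last m) = j) ∧ a = i
              then Z a (g 0) * ∏ ℓ : Fin m, Z (g ℓ.castSucc) (g ℓ.succ) else 0)
            = ∑ a, if (i < g 0 ∧ (StrictMono g ∧ g (Fin.last m) = j)) ∧ i = a
              then Z a (g 0) * ∏ ℓ : Fin m, Z (g ℓ.castSucc) (g ℓ.succ) else 0 from
            Finset.sum_congr rfl fun a _ => if_congr
              (by constructor
                  · rintro ⟨⟨⟨h1, h2⟩, h3⟩, h4⟩; exact ⟨⟨h4 ▸ h1, h2, h3⟩, h4.symm⟩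
                  · rintro ⟨⟨h1, h2, h3⟩, h4⟩; exact ⟨⟨⟨h4 ▸ h1, h2⟩, h3⟩, h4.symm⟩) rfl rfl]
          rw [collapse i _ _]
      _ = _ := by
          refine Finset.sum_congr rfl fun a _ => Finset.sum_congr rfl fun g _ => ?_
          exact (hcons a g).symm

private lemma trace_form {k : ℕ} (Z T : Matrix (Fin k) (Fin k) ℝ)
    (hT : ∀ i j, T i j = if i < j then Z i j else 0) (m : ℕ) :
    Matrix.trace (T ^ m * Z) = ∑ f : Fin (m + 1) → Fin k,
      if StrictMono f
      then (∏ ℓ : Fin m, Z (f ℓ.castSucc) (f ℓ.succ)) * Z (f (Fin.last m)) (f 0) else 0 := by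
  rw [Matrix.trace]
  simp only [Matrix.diag_apply, Matrix.mul_apply]
  calc ∑ i, ∑ j, (T ^ m) i j * Z j i
      = ∑ i, ∑ j, ∑ f : Fin (m + 1) → Fin k,
          if (StrictMono f ∧ f 0 = i) ∧ f (Fin.last m) = j
          then (∏ ℓ : Fin m, Z (f ℓ.castSucc) (f ℓ.succ)) * Z j i else 0 := by
        refine Finset.sum_congr rfl fun i _ => Finset.sum_congr rfl fun j _ => ?_
        rw [chain Z T hT m i j, Finset.sum_mul]
        refine Finset.sum_congr rfl fun f _ => ?_
        rw [ite_mul, zero_mul]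
        exact if_congr (by tauto) rfl rfl
    _ = ∑ f : Fin (m + 1) → Fin k, ∑ i, ∑ j,
          if (StrictMono f ∧ f 0 = i) ∧ f (Fin.last m) = j
          then (∏ ℓ : Fin m, Z (f ℓ.castSucc) (f ℓ.succ)) * Z j i else 0 := by
        rw [show (∑ i, ∑ j, ∑ f : Fin (m + 1) → Fin k,
            if (StrictMono f ∧ f 0 = i) ∧ f (Fin.last m) = j
            then (∏ ℓ : Fin m, Z (f ℓ.castSucc) (f ℓ.succ)) * Z j i else 0)
          = ∑ i, ∑ f : Fin (m + 1) → Fin k, ∑ j,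
            if (StrictMono f ∧ f 0 = i) ∧ f (Fin.last m) = j
            then (∏ ℓ : Fin m, Z (f ℓ.castSucc) (f ℓ.succ)) * Z j i else 0 from
          Finset.sum_congr rfl fun _ _ => Finset.sum_comm]
        exact Finset.sum_comm
    _ = ∑ f : Fin (m + 1) → Fin k, ∑ i,
          if StrictMono f ∧ f 0 = i
          then (∏ ℓ : Fin m, Z (f ℓ.castSucc) (f ℓ.succ)) * Z (f (Fin.last m)) i else 0 := by
        refine Finset.sum_congr rfl fun f _ => Finset.sum_congr rfl fun i _ => ?_
        exact collapse (f (Fin.last m)) _ _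
    _ = _ := by
        refine Finset.sum_congr rfl fun f _ => ?_
        exact collapse (f 0) _ _

/-- For any real `k × k` matrix `Z`, a positive integer `p ≤ k`, and `T`
the strictly upper triangular part of `Z`, the sum of the cycle products
`∏_{ℓ} Z_{i_ℓ, i_{ℓ+1}}` over all strictly increasing `p`-tuples `i_1 < ⋯ < i_p` in
`{1, …, k}` (with the cyclic convention `i_{p+1} ≡ i_1`) equals `trace(T^{p-1} Z)`. -/
theorem stmt1 {k p : ℕ} [NeZero p] (hpk : p ≤ k)
    (Z T : Matrix (Fin k) (Fin k) ℝ)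
    (hT : ∀ i j, T i j = if i < j then Z i j else 0) :
    (∑ s : {s : Finset (Fin k) // s.card = p},
        ∏ ℓ : Fin p, Z (s.1.orderEmbOfFin s.2 ℓ) (s.1.orderEmbOfFin s.2 (ℓ + 1)))
      = Matrix.trace (T ^ (p - 1) * Z) := by
  obtain ⟨m, rfl⟩ := Nat.exists_eq_succ_of_ne_zero (NeZero.ne p)
  rw [Nat.succ_sub_one, trace_form Z T hT m, ← Finset.sum_filter]
  refine Finset.sum_bij'
    (fun (s : {s : Finset (Fin k) // s.card = m + 1}) _ =>
      (⇑(s.1.orderEmbOfFin s.2) : Fin (m + 1) → Fin k))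
    (fun f hf => ⟨Finset.image f Finset.univ, by
      rw [Finset.card_image_of_injective _ ((Finset.mem_filter.1 hf).2).injective,
        Finset.card_univ, Fintype.card_fin]⟩) ?_ ?_ ?_ ?_ ?_
  · intro s _
    exact Finset.mem_filter.2 ⟨Finset.mem_univ _, (s.1.orderEmbOfFin s.2).strictMono⟩
  · intro f hf
    exact Finset.mem_univ _
  · intro s _
    refine Subtype.ext ?_
    apply Finset.coe_injective
    rw [Finset.coe_image, Finset.coe_univ, Set.image_univ, Finset.range_orderEmbOfFin]
  · intro f hf
    exact (Finset.orderEmbOfFin_unique _ (fun x => Finset.mem_image_of_mem f (Finset.mem_univ x))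
      (Finset.mem_filter.1 hf).2).symm
  · intro s _
    rw [Fin.prod_univ_castSucc]
    congr 1
    · exact Finset.prod_congr rfl fun ℓ _ => by rw [Fin.coeSucc_eq_succ]
    · rw [Fin.last_add_one]
end

section
/- Fix a positive integer p, nonnegative reals σ_1, …, σ_n, and 0 ≤ r ≤ p. There exists a constant C ≥ 0, independent of k, such that for every integer k ≥ 2p, the quantity F_r = Σ_{(i_1,…,j_p) ∈ I_r} E[f_{i_1,…,j_p}] satisfies |F_r| ≤ C·k^{2p−r}, where the ω_{t,i} (for 1 ≤ t ≤ n, 1 ≤ i ≤ k) are i.i.d. standard Gaussian N(0,1) random variables. Consequently, E[Θ̂_{2p}²] = Σ_{r=0}^{p} F_r is bounded by a constant times k^{2p}. -/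
open MeasureTheory ProbabilityTheory

/-- The random variable `f_{i_1,…,j_p}` from the paper:
`f = ∏_{h=1}^{p} (Σ_t σ_t² ω_{t,i_h} ω_{t,i_{h+1}}) (Σ_s σ_s² ω_{s,j_h} ω_{s,j_{h+1}})`,
with the cyclic conventions `i_{p+1} ≡ i_1` and `j_{p+1} ≡ j_1`. -/
noncomputable def fTerm {n k p : ℕ} [NeZero p] (σ : Fin n → ℝ) {Ω : Type}
    (ω : Fin n → Fin k → Ω → ℝ) (i j : Fin p → Fin k) (x : Ω) : ℝ :=
  ∏ h : Fin p,
    ((∑ t, σ t ^ 2 * ω t (i h) x * ω t (i (h + 1)) x) *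
      (∑ s, σ s ^ 2 * ω s (j h) x * ω s (j (h + 1)) x))

/-- The rescaled estimator `Θ̂_{2p}` written directly in terms of the Gaussian variables:
`Θ̂_{2p} = Σ_{i_1<…<i_p} ∏_{h=1}^{p} (Σ_t σ_t² ω_{t,i_h} ω_{t,i_{h+1}})`. -/
noncomputable def bigTheta (n k p : ℕ) [NeZero p] (σ : Fin n → ℝ) {Ω : Type}
    (ω : Fin n → Fin k → Ω → ℝ) (x : Ω) : ℝ :=
  ∑ i ∈ Finset.univ.filter (fun i : Fin p → Fin k => StrictMono i),
    ∏ h : Fin p, (∑ t, σ t ^ 2 * ω t (i h) x * ω t (i (h + 1)) x)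

/-!
Every expectation `E[f_{i,j}]` is bounded uniformly in `k`. If `S` is the set of (at most `2p`)
indices occurring in `i` and `j`, each factor `Σ_t σ_t² ω_{t,a} ω_{t,b}` is at most
`Z = Σ_{c ∈ S} Σ_t σ_t² ω_{t,c}²` in absolute value (AM-GM), so `|f_{i,j}| ≤ Z^{2p}`, and two
applications of the power-mean inequality bound `Z^{2p}` by a combination of `4p`-th moments of
standard Gaussians. It remains to count: a pair in `I_r` is determined by `i`, the set of positions
of `i` whose entries also occur in `j` (at most `2^p` choices), and the `p - r` entries of `j` not
in `i` (at most `k^{p-r}` choices), so `|I_r| ≤ 2^p k^{2p-r}`; and `Θ̂_{2p}²` is a sum of at most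
`k^{2p}` terms `f_{i,j}`.
-/

open Finset

lemma abs_sum_le_card_mul {ι : Type*} {s : Finset ι} {f : ι → ℝ} {B : ℝ}
    (h : ∀ i ∈ s, |f i| ≤ B) : |∑ i ∈ s, f i| ≤ #s * B :=
  (abs_sum_le_sum_abs _ _).trans ((sum_le_card_nsmul _ _ _ h).trans_eq (nsmul_eq_mul _ _))

section Gram

variable {n k : ℕ} {Ω : Type*} (σ : Fin n → ℝ) (ω : Fin n → Fin k → Ω → ℝ)

noncomputable def gram (a b : Fin k) (x : Ω) : ℝ :=
  ∑ t, σ t ^ 2 * ω t a x * ω t b x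

lemma gram_self_nonneg (a : Fin k) (x : Ω) : 0 ≤ gram σ ω a a x :=
  sum_nonneg fun t _ => by nlinarith [sq_nonneg (σ t), mul_self_nonneg (ω t a x)]

lemma abs_gram_le (a b : Fin k) (x : Ω) :
    |gram σ ω a b x| ≤ (gram σ ω a a x + gram σ ω b b x) / 2 := by
  calc |gram σ ω a b x| ≤ ∑ t, |σ t ^ 2 * ω t a x * ω t b x| := abs_sum_le_sum_abs _ _
    _ ≤ ∑ t, (σ t ^ 2 * ω t a x * ω t a x + σ t ^ 2 * ω t b x * ω t b x) / 2 := by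
        refine sum_le_sum fun t _ => ?_
        rw [abs_mul, abs_mul, abs_of_nonneg (sq_nonneg _)]
        nlinarith [mul_nonneg (sq_nonneg (σ t)) (sq_nonneg (|ω t a x| - |ω t b x|)),
          abs_mul_abs_self (ω t a x), abs_mul_abs_self (ω t b x)]
    _ = _ := by simp only [gram, ← sum_add_distrib, sum_div]

lemma abs_gram_le_sum_gram_self {S : Finset (Fin k)} {a b : Fin k} (ha : a ∈ S) (hb : b ∈ S)
    (x : Ω) : |gram σ ω a b x| ≤ ∑ c ∈ S, gram σ ω c c x := by
  have hle : ∀ c ∈ S, gram σ ω c c x ≤ ∑ c ∈ S, gram σ ω c c x := fun c hc =>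
    single_le_sum (fun c _ => gram_self_nonneg σ ω c x) hc
  linarith [abs_gram_le σ ω a b x, hle a ha, hle b hb]

lemma gram_self_pow_le (a : Fin k) (x : Ω) (m : ℕ) :
    gram σ ω a a x ^ (m + 1) ≤
      (n : ℝ) ^ m * ∑ t, σ t ^ (2 * (m + 1)) * |ω t a x| ^ (2 * (m + 1)) := by
  have h := pow_sum_le_card_mul_sum_pow (s := univ) (f := fun t => σ t ^ 2 * ω t a x * ω t a x)
    (fun t _ => by nlinarith [sq_nonneg (σ t), mul_self_nonneg (ω t a x)]) m
  simp only [card_univ, Fintype.card_fin] at h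
  refine h.trans_eq ?_
  congr 1
  refine sum_congr rfl fun t _ => ?_
  rw [mul_assoc, ← abs_mul_abs_self, ← sq, mul_pow, ← pow_mul, ← pow_mul]

noncomputable def momentEnvelope (S : Finset (Fin k)) (q : ℕ) (x : Ω) : ℝ :=
  ∑ c ∈ S, ∑ t, σ t ^ q * |ω t c x| ^ q

end Gram

section Pointwise

variable {n k p : ℕ} [NeZero p] {Ω : Type} (σ : Fin n → ℝ) (ω : Fin n → Fin k → Ω → ℝ)

lemma fTerm_eq_prod_gram (i j : Fin p → Fin k) (x : Ω) :
    fTerm σ ω i j x = ∏ h, gram σ ω (i h) (i (h + 1)) x * gram σ ω (j h) (j (h + 1)) x :=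
  rfl

lemma abs_fTerm_le_pow {S : Finset (Fin k)} {i j : Fin p → Fin k} (hi : ∀ h, i h ∈ S)
    (hj : ∀ h, j h ∈ S) (x : Ω) :
    |fTerm σ ω i j x| ≤ (∑ c ∈ S, gram σ ω c c x) ^ (2 * p) := by
  calc |fTerm σ ω i j x|
      = ∏ h, |gram σ ω (i h) (i (h + 1)) x| * |gram σ ω (j h) (j (h + 1)) x| := by
        rw [fTerm_eq_prod_gram, abs_prod]; simp only [abs_mul]
    _ ≤ ∏ _h : Fin p, (∑ c ∈ S, gram σ ω c c x) * ∑ c ∈ S, gram σ ω c c x :=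
        prod_le_prod (fun _ _ => by positivity) fun h _ =>
          mul_le_mul (abs_gram_le_sum_gram_self σ ω (hi h) (hi _) x)
            (abs_gram_le_sum_gram_self σ ω (hj h) (hj _) x) (abs_nonneg _)
            ((abs_nonneg _).trans (abs_gram_le_sum_gram_self σ ω (hi h) (hi h) x))
    _ = _ := by rw [prod_const, card_univ, Fintype.card_fin, ← sq, ← pow_mul]

lemma abs_fTerm_le_envelope {S : Finset (Fin k)} {i j : Fin p → Fin k} (hi : ∀ h, i h ∈ S)
    (hj : ∀ h, j h ∈ S) (x : Ω) :
    |fTerm σ ω i j x| ≤ ((#S : ℝ) * n) ^ (2 * p - 1) * momentEnvelope σ ω S (4 * p) x := by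
  obtain ⟨q, hq⟩ : ∃ q, 2 * p = q + 1 := ⟨2 * p - 1, by have := NeZero.pos p; omega⟩
  rw [hq, Nat.add_sub_cancel, show 4 * p = 2 * (q + 1) by omega, mul_pow, mul_assoc,
    momentEnvelope, mul_sum]
  refine (abs_fTerm_le_pow σ ω hi hj x).trans ?_
  rw [hq]
  refine (pow_sum_le_card_mul_sum_pow (fun c _ => gram_self_nonneg σ ω c x) q).trans ?_
  gcongr with c
  exact gram_self_pow_le σ ω c x q

end Pointwise

section Moments

variable {Ω : Type*} [MeasurableSpace Ω] {μ : Measure Ω} {X : Ω → ℝ}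

lemma integrable_abs_pow_of_map_eq_gaussianReal (hX : Measurable X) {m : ℝ} {v : NNReal}
    (hmap : μ.map X = gaussianReal m v) (q : ℕ) : Integrable (fun x => |X x| ^ q) μ := by
  have hG : Integrable (fun y : ℝ => ‖y‖ ^ q) (gaussianReal m v) := by
    have := memLp_id_gaussianReal (μ := m) (v := v) q
    exact (by simpa using this : MemLp id q (gaussianReal m v)).integrable_norm_pow'
  rw [← hmap] at hG
  exact (integrable_map_measure (by fun_prop) hX.aemeasurable).1 hG

lemma integral_abs_pow_of_map_eq_gaussianReal (hX : Measurable X) {m : ℝ} {v : NNReal}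
    (hmap : μ.map X = gaussianReal m v) (q : ℕ) :
    ∫ x, |X x| ^ q ∂μ = ∫ y, |y| ^ q ∂gaussianReal m v := by
  rw [← hmap, integral_map hX.aemeasurable (by fun_prop)]

end Moments

section Expectation

variable {n k : ℕ} {Ω : Type} [MeasurableSpace Ω] {μ : Measure Ω} (σ : Fin n → ℝ)
  {ω : Fin n → Fin k → Ω → ℝ}

noncomputable def fTermBound (n p : ℕ) (σ : Fin n → ℝ) : ℝ :=
  (2 * p * n : ℝ) ^ (2 * p - 1) * (2 * p) * (∑ t, σ t ^ (4 * p)) *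
    ∫ y, |y| ^ (4 * p) ∂gaussianReal 0 1

lemma sum_pow_four_mul_nonneg (p : ℕ) : 0 ≤ ∑ t, σ t ^ (4 * p) :=
  sum_nonneg fun t _ => (even_two_mul (2 * p)).pow_nonneg _ |>.trans_eq (by ring_nf)

lemma fTermBound_nonneg (p : ℕ) : 0 ≤ fTermBound n p σ := by
  have := sum_pow_four_mul_nonneg σ p
  have : 0 ≤ ∫ y, |y| ^ (4 * p) ∂gaussianReal 0 1 := integral_nonneg fun y => by positivity
  unfold fTermBound
  positivity

variable (hmeas : ∀ t a, Measurable (ω t a)) (hmap : ∀ t a, μ.map (ω t a) = gaussianReal 0 1)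
include hmeas hmap

lemma integrable_moment_envelope (S : Finset (Fin k)) (q : ℕ) :
    Integrable (momentEnvelope σ ω S q) μ :=
  integrable_finsetSum _ fun c _ => integrable_finsetSum _ fun t _ =>
    (integrable_abs_pow_of_map_eq_gaussianReal (hmeas t c) (hmap t c) q).const_mul _

lemma integral_moment_envelope (S : Finset (Fin k)) (q : ℕ) :
    ∫ x, momentEnvelope σ ω S q x ∂μ =
      #S * (∑ t, σ t ^ q) * ∫ y, |y| ^ q ∂gaussianReal 0 1 := by
  have hint := fun t c => integrable_abs_pow_of_map_eq_gaussianReal (hmeas t c) (hmap t c) q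
  unfold momentEnvelope
  rw [integral_finsetSum _ fun c _ => integrable_finsetSum _ fun t _ => (hint t c).const_mul _]
  simp only [integral_finsetSum _ fun t _ => (hint t _).const_mul _, integral_const_mul,
    integral_abs_pow_of_map_eq_gaussianReal (hmeas _ _) (hmap _ _), sum_const, nsmul_eq_mul]
  rw [← sum_mul, mul_assoc]

variable {p : ℕ} [NeZero p]

lemma integrable_fTerm (i j : Fin p → Fin k) : Integrable (fTerm σ ω i j) μ := by
  classical
  set S := image i univ ∪ image j univ
  refine ((integrable_moment_envelope σ hmeas hmap S (4 * p)).const_mul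
    (((#S : ℝ) * n) ^ (2 * p - 1))).mono' (by unfold fTerm; fun_prop) (ae_of_all _ fun x => ?_)
  exact abs_fTerm_le_envelope σ ω (fun h => by simp [S]) (fun h => by simp [S]) x

lemma abs_integral_fTerm_le (i j : Fin p → Fin k) :
    |∫ x, fTerm σ ω i j x ∂μ| ≤ fTermBound n p σ := by
  classical
  set S := image i univ ∪ image j univ
  have hS : #S ≤ 2 * p := (card_union_le _ _).trans <| by
    simpa [two_mul] using
      add_le_add (card_image_le (s := univ) (f := i)) (card_image_le (s := univ) (f := j))
  calc |∫ x, fTerm σ ω i j x ∂μ| ≤ ∫ x, |fTerm σ ω i j x| ∂μ := abs_integral_le_integral_abs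
    _ ≤ ∫ x, ((#S : ℝ) * n) ^ (2 * p - 1) * momentEnvelope σ ω S (4 * p) x ∂μ :=
        integral_mono (integrable_fTerm σ hmeas hmap i j).abs
          ((integrable_moment_envelope σ hmeas hmap S _).const_mul _)
          fun x => abs_fTerm_le_envelope σ ω (fun h => by simp [S]) (fun h => by simp [S]) x
    _ = ((#S : ℝ) * n) ^ (2 * p - 1) * #S * (∑ t, σ t ^ (4 * p)) *
          ∫ y, |y| ^ (4 * p) ∂gaussianReal 0 1 := by
        rw [integral_const_mul, integral_moment_envelope σ hmeas hmap]; ring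
    _ ≤ fTermBound n p σ := by
        unfold fTermBound
        have := sum_pow_four_mul_nonneg σ p
        have : 0 ≤ ∫ y, |y| ^ (4 * p) ∂gaussianReal 0 1 := integral_nonneg fun y => by positivity
        gcongr <;> exact_mod_cast hS

end Expectation

section Counting

variable {p k : ℕ}

lemma StrictMono.eq_of_image_univ_eq {f g : Fin p → Fin k} (hf : StrictMono f)
    (hg : StrictMono g) (h : image f univ = image g univ) : f = g :=
  (hf.range_inj hg).1 (by simpa using congrArg ((↑) : Finset (Fin k) → Set (Fin k)) h)

def overlapPairs (p k r : ℕ) : Finset ((Fin p → Fin k) × (Fin p → Fin k)) :=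
  {ij | StrictMono ij.1 ∧ StrictMono ij.2 ∧ #(image ij.1 univ ∩ image ij.2 univ) = r}

lemma card_overlapPairs_fiber_le (r : ℕ) (i : Fin p → Fin k) :
    #{ij ∈ overlapPairs p k r | ij.1 = i} ≤ 2 ^ p * k ^ (p - r) := by
  calc #{ij ∈ overlapPairs p k r | ij.1 = i}
      ≤ #((image i univ).powerset ×ˢ powersetCard (p - r) (univ : Finset (Fin k))) := by
        refine card_le_card_of_injOn
          (fun ij => (image i univ ∩ image ij.2 univ, image ij.2 univ \ image i univ)) ?_ ?_
        · rintro ⟨i', j⟩ hij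
          simp only [overlapPairs, coe_filter, mem_filter, mem_univ, true_and,
            Set.mem_ofPred_eq] at hij
          obtain ⟨⟨-, hj, hr⟩, rfl⟩ := hij
          simp only [coe_product, Set.mem_prod, mem_coe, mem_powerset, inter_subset_left,
            mem_powersetCard_univ, card_sdiff, hr, card_image_of_injective _ hj.injective,
            card_univ, Fintype.card_fin, and_self]
        · rintro ⟨i₁, j⟩ hij ⟨i₂, j'⟩ hij' heq
          simp only [overlapPairs, coe_filter, mem_filter, mem_univ, true_and,
            Set.mem_ofPred_eq] at hij hij'
          obtain ⟨⟨-, hj, -⟩, hi₁⟩ := hij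
          obtain ⟨⟨-, hj', -⟩, hi₂⟩ := hij'
          simp only [Prod.mk.injEq] at heq
          have himage : image j univ = image j' univ := by
            rw [← sdiff_union_inter (image j univ) (image i univ),
              ← sdiff_union_inter (image j' univ) (image i univ), inter_comm (image j univ),
              inter_comm (image j' univ), heq.1, heq.2]
          rw [hi₁, hi₂, hj.eq_of_image_univ_eq hj' himage]
    _ ≤ 2 ^ p * k ^ (p - r) := by
        rw [card_product, card_powerset, card_powersetCard, card_univ, Fintype.card_fin]
        gcongr
        · exact one_le_two
        · exact card_image_le.trans_eq (by simp)
        · exact Nat.choose_le_pow k (p - r)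

lemma card_overlapPairs_le {r : ℕ} (hr : r ≤ p) :
    #(overlapPairs p k r) ≤ 2 ^ p * k ^ (2 * p - r) := by
  calc #(overlapPairs p k r) ≤ 2 ^ p * k ^ (p - r) * #(univ : Finset (Fin p → Fin k)) :=
        card_le_mul_card_image_of_maps_to (f := Prod.fst) (fun _ _ => mem_univ _) _
          fun i _ => card_overlapPairs_fiber_le r i
    _ = 2 ^ p * k ^ (2 * p - r) := by
        rw [card_univ, Fintype.card_fun, Fintype.card_fin, Fintype.card_fin,
          show 2 * p - r = (p - r) + p by omega, pow_add, mul_assoc]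

end Counting

lemma bigTheta_sq {n k p : ℕ} [NeZero p] (σ : Fin n → ℝ) {Ω : Type}
    (ω : Fin n → Fin k → Ω → ℝ) (x : Ω) :
    bigTheta n k p σ ω x ^ 2 =
      ∑ ij ∈ (univ.filter StrictMono ×ˢ univ.filter StrictMono :
          Finset ((Fin p → Fin k) × (Fin p → Fin k))),
        fTerm σ ω ij.1 ij.2 x := by
  rw [bigTheta, sq, sum_mul_sum, sum_product]
  exact sum_congr rfl fun i _ => sum_congr rfl fun j _ => prod_mul_distrib.symm

theorem stmt7_general {n p : ℕ} [NeZero p] (σ : Fin n → ℝ)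
    (r : ℕ) (hr : r ≤ p) :
    ∃ C : ℝ, 0 ≤ C ∧ ∃ C' : ℝ, 0 ≤ C' ∧ ∀ (k : ℕ), 2 * p ≤ k →
      ∀ (Ω : Type) [MeasureSpace Ω] [IsProbabilityMeasure (ℙ : Measure Ω)]
        (ω : Fin n → Fin k → Ω → ℝ),
        (∀ a b, Measurable (ω a b)) →
        (∀ a b, Measure.map (ω a b) ℙ = gaussianReal 0 1) →
        (iIndepFun
          (fun ab : Fin n × Fin k => ω ab.1 ab.2) ℙ) →
        |∑ ij ∈ Finset.univ.filter
            (fun ij : (Fin p → Fin k) × (Fin p → Fin k) =>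
              StrictMono ij.1 ∧ StrictMono ij.2 ∧
              (Finset.image ij.1 Finset.univ ∩ Finset.image ij.2 Finset.univ).card = r),
            ∫ x, fTerm σ ω ij.1 ij.2 x ∂ℙ| ≤ C * (k : ℝ) ^ (2 * p - r) ∧
        (∫ x, (bigTheta n k p σ ω x) ^ 2 ∂ℙ) ≤ C' * (k : ℝ) ^ (2 * p) := by
  have hB := fTermBound_nonneg σ p
  refine ⟨2 ^ p * fTermBound n p σ, by positivity, fTermBound n p σ, hB, ?_⟩
  intro k _ Ω _ _ ω hmeas hmap _
  have hfTerm := fun ij : (Fin p → Fin k) × (Fin p → Fin k) =>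
    abs_integral_fTerm_le σ hmeas hmap ij.1 ij.2
  constructor
  · change |∑ ij ∈ overlapPairs p k r, _| ≤ _
    calc _ ≤ #(overlapPairs p k r) * fTermBound n p σ :=
          abs_sum_le_card_mul fun ij _ => hfTerm ij
      _ ≤ (2 ^ p * k ^ (2 * p - r) : ℕ) * fTermBound n p σ := by
          gcongr; exact card_overlapPairs_le hr
      _ = _ := by push_cast; ring
  · set P : Finset (Fin p → Fin k) := univ.filter StrictMono
    have hP : #P ≤ k ^ p := (card_filter_le _ _).trans_eq (by simp)
    calc ∫ x, bigTheta n k p σ ω x ^ 2 = ∑ ij ∈ P ×ˢ P, ∫ x, fTerm σ ω ij.1 ij.2 x := by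
          simp_rw [bigTheta_sq]
          exact integral_finsetSum _ fun ij _ => integrable_fTerm σ hmeas hmap ij.1 ij.2
      _ ≤ #(P ×ˢ P) * fTermBound n p σ :=
          (le_abs_self _).trans (abs_sum_le_card_mul fun ij _ => hfTerm ij)
      _ ≤ (k ^ p * k ^ p : ℕ) * fTermBound n p σ := by
          gcongr; rw [card_product]; exact Nat.mul_le_mul hP hP
      _ = _ := by push_cast; ring

/-- For fixed `p`, `σ` and `0 ≤ r ≤ p`, there is a constant `C ≥ 0`,
independent of `k`, such that for every `k ≥ 2p` the quantity
`F_r = Σ_{(i,j) ∈ I_r} E[f_{i_1,…,j_p}]` satisfies `|F_r| ≤ C·k^{2p-r}`; consequently,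
the second moment `E[Θ̂_{2p}²]` is bounded by a constant times `k^{2p}`. -/
theorem stmt7 {n p : ℕ} [NeZero p] (σ : Fin n → ℝ) (hσ : ∀ a, 0 ≤ σ a)
    (r : ℕ) (hr : r ≤ p) :
    ∃ C : ℝ, 0 ≤ C ∧ ∃ C' : ℝ, 0 ≤ C' ∧ ∀ (k : ℕ), 2 * p ≤ k →
      ∀ (Ω : Type) [MeasureSpace Ω] [IsProbabilityMeasure (ℙ : Measure Ω)]
        (ω : Fin n → Fin k → Ω → ℝ),
        (∀ a b, Measurable (ω a b)) →
        (∀ a b, Measure.map (ω a b) ℙ = gaussianReal 0 1) →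
        (iIndepFun
          (fun ab : Fin n × Fin k => ω ab.1 ab.2) ℙ) →
        |∑ ij ∈ Finset.univ.filter
            (fun ij : (Fin p → Fin k) × (Fin p → Fin k) =>
              StrictMono ij.1 ∧ StrictMono ij.2 ∧
              (Finset.image ij.1 Finset.univ ∩ Finset.image ij.2 Finset.univ).card = r),
            ∫ x, fTerm σ ω ij.1 ij.2 x ∂ℙ| ≤ C * (k : ℝ) ^ (2 * p - r) ∧
        (∫ x, (bigTheta n k p σ ω x) ^ 2 ∂ℙ) ≤ C' * (k : ℝ) ^ (2 * p) :=
  stmt7_general σ r hr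
end

section
/- Let σ_1, …, σ_n be nonnegative reals and let ω_{t,i} (1 ≤ t ≤ n, 1 ≤ i ≤ k) be i.i.d. standard Gaussian N(0,1) random variables. Fix strictly increasing p-tuples (i_1 < … < i_p) and (j_1 < … < j_p) in {1, …, k} and indices t_1, …, t_p, s_1, …, s_p in {1, …, n}, and set Y = ∏_{h=1}^{p} σ_{t_h}² ω_{t_h,i_h} ω_{t_h,i_{h+1}} σ_{s_h}² ω_{s_h,j_h} ω_{s_h,j_{h+1}} (with i_{p+1} ≡ i_1, j_{p+1} ≡ j_1, t_0 ≡ t_p, s_0 ≡ s_p). If for some h ∈ {1, …, p} the index i_h does not occur among {j_1, …, j_p} (i.e., i_h is a non-repeated index) and t_{h−1} ≠ t_h, then E[Y] = 0. Likewise, if j_h does not occur among {i_1, …, i_p} and s_{h−1} ≠ s_h, then E[Y] = 0. -/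
open MeasureTheory ProbabilityTheory

/-- The random variable `Y_{i_1,…,j_p}^{t_1,…,s_p}` from the paper:
`Y = ∏_{h=1}^{p} σ_{t_h}² ω_{t_h,i_h} ω_{t_h,i_{h+1}} σ_{s_h}² ω_{s_h,j_h} ω_{s_h,j_{h+1}}`,
with the cyclic conventions `i_{p+1} ≡ i_1` and `j_{p+1} ≡ j_1`. -/
noncomputable def yTerm {n k p : ℕ} [NeZero p] (σ : Fin n → ℝ) {Ω : Type}
    (ω : Fin n → Fin k → Ω → ℝ) (i j : Fin p → Fin k) (t s : Fin p → Fin n)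
    (x : Ω) : ℝ :=
  ∏ h : Fin p,
    (σ (t h) ^ 2 * ω (t h) (i h) x * ω (t h) (i (h + 1)) x *
      σ (s h) ^ 2 * ω (s h) (j h) x * ω (s h) (j (h + 1)) x)

/-! The Gaussian `ω_{t_h, i_h}` occurs exactly once among the `4p` Gaussian factors of `Y`:
it cannot be a `j`-factor since `i_h` is non-repeated, and among the `i`-factors only
`ω_{t_{h-1}, i_h}` could coincide with it, which `t_{h-1} ≠ t_h` excludes. By independence
it splits off from the rest of the product, and its mean is zero. -/

def yTermIndex {n k p : ℕ} [NeZero p] (i j : Fin p → Fin k) (t s : Fin p → Fin n)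
    (a : Fin p × Fin 4) : Fin n × Fin k :=
  ![(t a.1, i a.1), (t a.1, i (a.1 + 1)), (s a.1, j a.1), (s a.1, j (a.1 + 1))] a.2

namespace ProbabilityTheory

variable {Ω ι β : Type*} [MeasurableSpace Ω] {μ : Measure Ω} {X : ι → Ω → ℝ}

lemma iIndepFun.indepFun_finsetProd_comp_of_ne (hX : iIndepFun X μ)
    (hmeas : ∀ c, Measurable (X c)) (f : β → ι) (s : Finset β) {e : ι}
    (hs : ∀ a ∈ s, f a ≠ e) :
    IndepFun (X e) (fun x => ∏ a ∈ s, X (f a) x) μ := by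
  classical
  have hdisj : Disjoint {e} (s.image f) := by
    simpa [Finset.disjoint_singleton_left] using hs
  have hproj : Measurable fun v : ({e} : Finset ι) → ℝ => v ⟨e, Finset.mem_singleton_self e⟩ :=
    measurable_pi_apply _
  have hprod : Measurable fun v : s.image f → ℝ =>
      ∏ a ∈ s.attach, v ⟨f a, Finset.mem_image_of_mem f a.2⟩ :=
    Finset.measurable_prod _ fun _ _ => measurable_pi_apply _
  convert (hX.indepFun_finset _ _ hdisj hmeas).comp hproj hprod using 1
  · rfl
  · funext x
    exact (Finset.prod_attach s fun a => X (f a) x).symm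

lemma iIndepFun.integral_prod_comp_eq_zero [Fintype β] (hX : iIndepFun X μ)
    (hmeas : ∀ c, Measurable (X c)) (f : β → ι) {b : β} (hb : ∀ a, a ≠ b → f a ≠ f b)
    (hmean : ∫ x, X (f b) x ∂μ = 0) :
    ∫ x, ∏ a, X (f a) x ∂μ = 0 := by
  classical
  have hsplit : ∀ x, ∏ a, X (f a) x = X (f b) x * ∏ a ∈ Finset.univ.erase b, X (f a) x :=
    fun x => (Finset.mul_prod_erase _ _ (Finset.mem_univ b)).symm
  have hindep := hX.indepFun_finsetProd_comp_of_ne hmeas f (Finset.univ.erase b)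
    fun a ha => hb a (Finset.ne_of_mem_erase ha)
  simp_rw [hsplit]
  rw [hindep.integral_fun_mul_eq_mul_integral (hmeas _).aestronglyMeasurable
    (Finset.measurable_prod _ fun a _ => hmeas (f a)).aestronglyMeasurable, hmean, zero_mul]

end ProbabilityTheory

section YTerm

variable {n k p : ℕ} [NeZero p] {Ω : Type}

lemma yTerm_eq_mul_prod (σ : Fin n → ℝ) (ω : Fin n → Fin k → Ω → ℝ)
    (i j : Fin p → Fin k) (t s : Fin p → Fin n) (x : Ω) :
    yTerm σ ω i j t s x = (∏ h, σ (t h) ^ 2 * σ (s h) ^ 2) *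
      ∏ a, ω (yTermIndex i j t s a).1 (yTermIndex i j t s a).2 x := by
  rw [Fintype.prod_prod_type, ← Finset.prod_mul_distrib]
  refine Finset.prod_congr rfl fun h _ => ?_
  simp only [Fin.prod_univ_four, yTermIndex, Matrix.cons_val_zero, Matrix.cons_val_one,
    Matrix.cons_val_two, Matrix.cons_val_three, Matrix.head_cons, Matrix.tail_cons]
  ring

lemma yTerm_comm (σ : Fin n → ℝ) (ω : Fin n → Fin k → Ω → ℝ)
    (i j : Fin p → Fin k) (t s : Fin p → Fin n) :
    yTerm σ ω i j t s = yTerm σ ω j i s t := by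
  funext x
  exact Finset.prod_congr rfl fun h _ => by ring

lemma yTermIndex_ne_of_nonRepeated {i j : Fin p → Fin k} (hi : Function.Injective i)
    {t s : Fin p → Fin n} {h : Fin p} (hni : ∀ a, i h ≠ j a) (ht : t (h - 1) ≠ t h)
    (a : Fin p × Fin 4) (ha : a ≠ (h, 0)) :
    yTermIndex i j t s a ≠ yTermIndex i j t s (h, 0) := by
  obtain ⟨m, c⟩ := a
  intro hcon
  fin_cases c <;> simp [yTermIndex, Prod.ext_iff] at hcon ha
  · exact ha (hi hcon.2)
  · exact ht (eq_sub_of_add_eq (hi hcon.2) ▸ hcon.1)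
  · exact hni m hcon.2.symm
  · exact hni (m + 1) hcon.2.symm

lemma integral_yTerm_eq_zero_of_nonRepeated (σ : Fin n → ℝ) [MeasureSpace Ω]
    (ω : Fin n → Fin k → Ω → ℝ) (hmeas : ∀ a b, Measurable (ω a b))
    (hgauss : ∀ a b, Measure.map (ω a b) ℙ = gaussianReal 0 1)
    (hindep : iIndepFun (fun ab : Fin n × Fin k => ω ab.1 ab.2) ℙ)
    {i j : Fin p → Fin k} (hi : Function.Injective i) {t s : Fin p → Fin n}
    {h : Fin p} (hni : ∀ a, i h ≠ j a) (ht : t (h - 1) ≠ t h) :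
    ∫ x, yTerm σ ω i j t s x ∂ℙ = 0 := by
  have hmean (a : Fin n) (b : Fin k) : ∫ x, ω a b x ∂ℙ = 0 :=
    (HasLaw.mk (hmeas a b).aemeasurable (hgauss a b)).integral_eq.trans integral_id_gaussianReal
  simp_rw [yTerm_eq_mul_prod]
  rw [integral_const_mul, hindep.integral_prod_comp_eq_zero (fun ab => hmeas ab.1 ab.2) _
    (yTermIndex_ne_of_nonRepeated hi hni ht) (hmean _ _), mul_zero]

end YTerm

theorem stmt8_general {n k p : ℕ} [NeZero p] (σ : Fin n → ℝ)
    {Ω : Type} [MeasureSpace Ω]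
    (ω : Fin n → Fin k → Ω → ℝ)
    (hmeas : ∀ a b, Measurable (ω a b))
    (hgauss : ∀ a b, Measure.map (ω a b) ℙ = gaussianReal 0 1)
    (hindep : iIndepFun
      (fun ab : Fin n × Fin k => ω ab.1 ab.2) ℙ)
    (i j : Fin p → Fin k) (hi : StrictMono i) (hj : StrictMono j)
    (t s : Fin p → Fin n)
    (hodd : (∃ h : Fin p, (∀ a : Fin p, i h ≠ j a) ∧ t (h - 1) ≠ t h) ∨
      (∃ h : Fin p, (∀ a : Fin p, j h ≠ i a) ∧ s (h - 1) ≠ s h)) :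
    ∫ x, yTerm σ ω i j t s x ∂ℙ = 0 := by
  rcases hodd with ⟨h, hni, ht⟩ | ⟨h, hnj, hs⟩
  · exact integral_yTerm_eq_zero_of_nonRepeated σ ω hmeas hgauss hindep hi.injective hni ht
  · rw [yTerm_comm]
    exact integral_yTerm_eq_zero_of_nonRepeated σ ω hmeas hgauss hindep hj.injective hnj hs

/-- If some `i_h` is a non-repeated index (it occurs among none of the
`j`'s) and `t_{h-1} ≠ t_h` (cyclically, `t_0 ≡ t_p`), then `E[Y] = 0`; likewise with the
roles of `i, t` and `j, s` exchanged. -/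
theorem stmt8 {n k p : ℕ} [NeZero p] (σ : Fin n → ℝ) (hσ : ∀ a, 0 ≤ σ a)
    {Ω : Type} [MeasureSpace Ω] [IsProbabilityMeasure (ℙ : Measure Ω)]
    (ω : Fin n → Fin k → Ω → ℝ)
    (hmeas : ∀ a b, Measurable (ω a b))
    (hgauss : ∀ a b, Measure.map (ω a b) ℙ = gaussianReal 0 1)
    (hindep : iIndepFun
      (fun ab : Fin n × Fin k => ω ab.1 ab.2) ℙ)
    (i j : Fin p → Fin k) (hi : StrictMono i) (hj : StrictMono j)
    (t s : Fin p → Fin n)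
    (hodd : (∃ h : Fin p, (∀ a : Fin p, i h ≠ j a) ∧ t (h - 1) ≠ t h) ∨
      (∃ h : Fin p, (∀ a : Fin p, j h ≠ i a) ∧ s (h - 1) ≠ s h)) :
    ∫ x, yTerm σ ω i j t s x ∂ℙ = 0 :=
  stmt8_general σ ω hmeas hgauss hindep i j hi hj t s hodd
end

section
/- Let σ_1, …, σ_n be nonnegative reals and let ω_{t,i} (1 ≤ t ≤ n, 1 ≤ i ≤ k) be i.i.d. standard Gaussian N(0,1) random variables. If (i_1 < … < i_p) and (j_1 < … < j_p) are strictly increasing p-tuples in {1, …, k} whose index sets are disjoint (no repeated indices), then E[f_{i_1,…,j_p}] = (Σ_{t=1}^{n} σ_t^{2p})², i.e., E[f_{i_1,…,j_p}] = ‖A‖_{2p}^{4p} when σ_1, …, σ_n are the singular values of a matrix A. -/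
/-!
Let `W c = (ω_{t,c})_t` be the `c`-th column. The columns are independent and isotropic:
`E[ω_{s,c} ω_{t,c}] = δ_{st}`. The `i`-half of `f` is `∏_h ⟨W_{i_h}, Σ² W_{i_{h+1}}⟩` and depends
only on the columns `i_h`; the `j`-half only on the columns `j_h`. Since these column sets are
disjoint, the two halves are independent and `E f` is the product of their expectations.

Expanding one half as a sum over `a : Fin p → Fin n`, each monomial regroups by column as
`∏_h ω_{a_h, i_h} ω_{a_{h-1}, i_h}`, whose expectation is `∏_h δ(a_h, a_{h-1})` because distinct
columns are independent. Only constant `a` survive, so each half has expectation `Σ_t σ_t^{2p}`.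
-/

open MeasureTheory ProbabilityTheory

section Independence

variable {Ω : Type*} {mΩ : MeasurableSpace Ω} {P : Measure Ω}

lemma ProbabilityTheory.iIndepFun.curry_s9 {ι κ 𝓧 : Type*} {m𝓧 : MeasurableSpace 𝓧}
    {X : ι → κ → Ω → 𝓧} (mX : ∀ i j, Measurable (X i j))
    (h : iIndepFun (fun p : ι × κ ↦ X p.1 p.2) P) :
    iIndepFun (fun i ω j ↦ X i j ω) P := by
  have := h.isProbabilityMeasure
  have (i : ι) (j : κ) : IsProbabilityMeasure (P.map (X i j)) :=
    Measure.isProbabilityMeasure_map (mX i j).aemeasurable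
  have hrow (i : ι) : P.map (fun ω j ↦ X i j ω) = Measure.infinitePi fun j ↦ P.map (X i j) :=
    (h.precomp (Prod.mk_right_injective i)).map_fun_eq_infinitePi_map fun j ↦ mX i j
  have hjoint := h.map_fun_eq_infinitePi_map fun p : ι × κ ↦ mX p.1 p.2
  rw [iIndepFun_iff_map_fun_eq_infinitePi_map fun i ↦ by fun_prop]
  simp_rw [hrow]
  rw [← Measure.infinitePi_map_curry, ← hjoint,
    Measure.map_map (MeasurableEquiv.measurable _) (by fun_prop)]
  rfl

lemma ProbabilityTheory.iIndepFun.integrable_fun_prod {ι : Type*} [Fintype ι]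
    {X : ι → Ω → ℝ} (hX : iIndepFun X P) (mX : ∀ i, Measurable (X i))
    (hint : ∀ i, Integrable (X i) P) :
    Integrable (fun ω ↦ ∏ i, X i ω) P := by
  have := hX.isProbabilityMeasure
  have h := Integrable.fintype_prod (f := fun _ ↦ id) (μ := fun i ↦ P.map (X i))
    fun i ↦ (integrable_map_measure aestronglyMeasurable_id (mX i).aemeasurable).2 (hint i)
  rw [← hX.map_fun_eq_pi_map fun i ↦ (mX i).aemeasurable] at h
  exact (integrable_map_measure h.aestronglyMeasurable (by fun_prop)).1 h

lemma ProbabilityTheory.iIndepFun.indepFun_of_disjoint_range {κ α 𝓧 : Type*}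
    {m𝓧 : MeasurableSpace 𝓧} {W : κ → Ω → 𝓧} (hW : iIndepFun W P) (mW : ∀ c, Measurable (W c))
    {i j : α → κ} (hi : i.Injective) (hj : j.Injective) (hij : ∀ a b, i a ≠ j b) :
    IndepFun (fun ω a ↦ W (i a) ω) (fun ω a ↦ W (j a) ω) P := by
  -- The two families are the two rows of one independent array indexed by `Fin 2 × α`.
  have hinj : Function.Injective fun x : Fin 2 × α ↦ ![i, j] x.1 x.2 := by
    rintro ⟨b, a⟩ ⟨b', a'⟩ hbb
    fin_cases b <;> fin_cases b' <;> simp only [Fin.zero_eta, Fin.mk_one,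
      Matrix.cons_val_zero, Matrix.cons_val_one] at hbb
    · simp [hi hbb]
    · exact absurd hbb (hij a a')
    · exact absurd hbb.symm (hij a' a)
    · simp [hj hbb]
  exact ((hW.precomp hinj).curry_s9 fun _ _ ↦ mW _).indepFun zero_ne_one

end Independence

section Gaussian

variable {Ω : Type*} {mΩ : MeasurableSpace Ω} {P : Measure Ω} {X : Ω → ℝ}

lemma ProbabilityTheory.HasLaw.memLp_of_gaussianReal {μ : ℝ} {v : NNReal}
    (hX : HasLaw X (gaussianReal μ v) P) {q : ENNReal} (hq : q ≠ ⊤) : MemLp X q P := by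
  have h := memLp_id_gaussianReal' (μ := μ) (v := v) q hq
  rw [← hX.map_eq] at h
  exact h.comp_of_map hX.aemeasurable

lemma ProbabilityTheory.HasLaw.integral_of_gaussianReal {μ : ℝ} {v : NNReal}
    (hX : HasLaw X (gaussianReal μ v) P) : ∫ ω, X ω ∂P = μ :=
  hX.integral_eq.trans integral_id_gaussianReal

lemma ProbabilityTheory.HasLaw.integral_mul_self_of_gaussianReal
    (hX : HasLaw X (gaussianReal 0 1) P) : ∫ ω, X ω * X ω ∂P = 1 := by
  have := hX.isProbabilityMeasure
  have hvar := variance_eq_sub (hX.memLp_of_gaussianReal (q := 2) ENNReal.ofNat_ne_top)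
  rw [hX.variance_eq, variance_id_gaussianReal, hX.integral_of_gaussianReal] at hvar
  simpa [sq] using hvar.symm

lemma ProbabilityTheory.iIndepFun.integral_mul_of_gaussianReal {ι : Type*} [DecidableEq ι]
    {X : ι → Ω → ℝ} (hX : iIndepFun X P) (hlaw : ∀ t, HasLaw (X t) (gaussianReal 0 1) P)
    (s t : ι) : ∫ ω, X s ω * X t ω ∂P = if s = t then 1 else 0 := by
  split_ifs with hst
  · subst hst
    exact (hlaw s).integral_mul_self_of_gaussianReal
  · rw [(hX.indepFun hst).integral_fun_mul_eq_mul_integral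
      (hlaw s).aemeasurable.aestronglyMeasurable (hlaw t).aemeasurable.aestronglyMeasurable,
      (hlaw s).integral_of_gaussianReal, zero_mul]

end Gaussian

lemma Fin.eq_const_of_forall_apply_sub_one {p : ℕ} [NeZero p] {α : Type*} {a : Fin p → α}
    (ha : ∀ h, a h = a (h - 1)) : a = Function.const _ (a 0) := by
  obtain ⟨q, rfl⟩ := Nat.exists_eq_succ_of_ne_zero (NeZero.ne p)
  funext h
  induction h using Fin.induction with
  | zero => rfl
  | succ h ih => rw [ha, ← Fin.coeSucc_eq_succ, add_sub_cancel_right, ih]; rfl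

section Cyclic

variable {ι R : Type*} [Fintype ι] [CommSemiring R] {p : ℕ} [NeZero p]

def cyclicProd (d : ι → R) (v : Fin p → ι → R) : R :=
  ∏ h, ∑ t, d t * v h t * v (h + 1) t

lemma cyclicProd_eq_sum (d : ι → R) (v : Fin p → ι → R) :
    cyclicProd d v = ∑ a : Fin p → ι, (∏ h, d (a h)) * ∏ h, v h (a h) * v h (a (h - 1)) := by
  rw [cyclicProd, Finset.prod_univ_sum, Fintype.piFinset_univ]
  refine Finset.sum_congr rfl fun a _ ↦ ?_
  have hshift : ∏ h, v (h + 1) (a h) = ∏ h, v h (a (h - 1)) :=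
    Fintype.prod_equiv (Equiv.addRight 1) _ _ fun h ↦ by simp
  simp only [Finset.prod_mul_distrib, hshift, mul_assoc]

lemma sum_prod_mul_prod_boole_eq_sum_pow [DecidableEq ι] (d : ι → R) :
    ∑ a : Fin p → ι, (∏ h, d (a h)) * ∏ h, (if a h = a (h - 1) then 1 else 0) =
      ∑ t, d t ^ p := by
  simp only [Fintype.prod_boole, mul_ite, mul_one, mul_zero]
  rw [← Finset.sum_filter]
  have hconst : Finset.univ.filter (fun a : Fin p → ι ↦ ∀ h, a h = a (h - 1)) =
      Finset.univ.map ⟨Function.const _, Function.const_injective⟩ := by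
    ext a
    simp only [Finset.mem_filter, Finset.mem_univ, true_and, Finset.mem_map,
      Function.Embedding.coeFn_mk]
    exact ⟨fun ha ↦ ⟨a 0, (Fin.eq_const_of_forall_apply_sub_one ha).symm⟩,
      by rintro ⟨t, rfl⟩ h; rfl⟩
  simp [hconst]

end Cyclic

section Moment

variable {Ω ι : Type*} {mΩ : MeasurableSpace Ω} {P : Measure Ω} [Fintype ι] {p : ℕ} [NeZero p]

lemma measurable_cyclicProd (d : ι → ℝ) : Measurable (cyclicProd (p := p) d) := by
  unfold cyclicProd
  fun_prop

lemma integral_cyclicProd [DecidableEq ι] (d : ι → ℝ) {V : Fin p → Ω → ι → ℝ}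
    (hV : iIndepFun V P) (mV : ∀ h, Measurable (V h))
    (hint : ∀ h s t, Integrable (fun ω ↦ V h ω s * V h ω t) P)
    (hcov : ∀ h s t, ∫ ω, V h ω s * V h ω t ∂P = if s = t then 1 else 0) :
    ∫ ω, cyclicProd d (fun h ↦ V h ω) ∂P = ∑ t, d t ^ p := by
  have hfactor (a : Fin p → ι) :
      iIndepFun (fun h ω ↦ V h ω (a h) * V h ω (a (h - 1))) P :=
    hV.comp (fun h v ↦ v (a h) * v (a (h - 1))) fun h ↦ by fun_prop
  have mfactor (a : Fin p → ι) (h : Fin p) :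
      Measurable fun ω ↦ V h ω (a h) * V h ω (a (h - 1)) := by fun_prop
  simp_rw [cyclicProd_eq_sum]
  rw [integral_finsetSum _ fun a _ ↦
    ((hfactor a).integrable_fun_prod (mfactor a) fun h ↦ hint h _ _).const_mul _]
  simp_rw [integral_const_mul]
  rw [← sum_prod_mul_prod_boole_eq_sum_pow]
  refine Finset.sum_congr rfl fun a _ ↦ ?_
  rw [(hfactor a).integral_fun_prod_eq_prod_integral fun h ↦ (mfactor a h).aestronglyMeasurable]
  simp_rw [hcov]

end Moment

lemma fTerm_eq_cyclicProd_mul_cyclicProd {n k p : ℕ} [NeZero p] (σ : Fin n → ℝ) {Ω : Type}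
    (ω : Fin n → Fin k → Ω → ℝ) (i j : Fin p → Fin k) (x : Ω) :
    fTerm σ ω i j x = cyclicProd (σ · ^ 2) (fun h t ↦ ω t (i h) x) *
      cyclicProd (σ · ^ 2) (fun h t ↦ ω t (j h) x) :=
  Finset.prod_mul_distrib

theorem stmt9_general {n k p : ℕ} [NeZero p] (σ : Fin n → ℝ)
    {Ω : Type} [MeasureSpace Ω] [IsProbabilityMeasure (ℙ : Measure Ω)]
    (ω : Fin n → Fin k → Ω → ℝ)
    (hmeas : ∀ t i, Measurable (ω t i))
    (hgauss : ∀ t i, Measure.map (ω t i) ℙ = gaussianReal 0 1)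
    (hindep : iIndepFun
      (fun ti : Fin n × Fin k => ω ti.1 ti.2) ℙ)
    (i j : Fin p → Fin k) (hi : StrictMono i) (hj : StrictMono j)
    (hdisj : ∀ a b, i a ≠ j b) :
    ∫ x, fTerm σ ω i j x ∂ℙ = (∑ t, σ t ^ (2 * p)) ^ 2 := by
  have hlaw (t : Fin n) (c : Fin k) : HasLaw (ω t c) (gaussianReal 0 1) ℙ :=
    ⟨(hmeas t c).aemeasurable, hgauss t c⟩
  have hcols : iIndepFun (fun c x t ↦ ω t c x) ℙ :=
    (hindep.precomp Prod.swap_injective).curry_s9 fun c t ↦ hmeas t c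
  have mcols (c : Fin k) : Measurable fun x t ↦ ω t c x := by fun_prop
  have hmoment {u : Fin p → Fin k} (hu : u.Injective) :
      ∫ x, cyclicProd (σ · ^ 2) (fun h t ↦ ω t (u h) x) ∂ℙ = ∑ t, σ t ^ (2 * p) := by
    simp_rw [pow_mul]
    refine integral_cyclicProd _ (hcols.precomp hu) (fun h ↦ mcols _)
      (fun h s t ↦ ((hlaw s _).memLp_of_gaussianReal (q := 2) ENNReal.ofNat_ne_top).integrable_mul
        ((hlaw t _).memLp_of_gaussianReal (q := 2) ENNReal.ofNat_ne_top)) fun h ↦ ?_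
    exact (hindep.precomp (Prod.mk_left_injective (u h))).integral_mul_of_gaussianReal
      fun t ↦ hlaw t _
  have hindep_ij : IndepFun (fun x h t ↦ ω t (i h) x) (fun x h t ↦ ω t (j h) x) ℙ :=
    hcols.indepFun_of_disjoint_range mcols hi.injective hj.injective hdisj
  simp_rw [fTerm_eq_cyclicProd_mul_cyclicProd]
  rw [hindep_ij.integral_fun_comp_mul_comp (by fun_prop) (by fun_prop)
    (measurable_cyclicProd _).aestronglyMeasurable (measurable_cyclicProd _).aestronglyMeasurable,
    hmoment hi.injective, hmoment hj.injective, sq]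

/-- If the index sets of the two strictly increasing `p`-tuples are
disjoint (no repeated index), then `E[f_{i_1,…,j_p}] = (Σ_t σ_t^{2p})² = ‖A‖_{2p}^{4p}`. -/
theorem stmt9 {n k p : ℕ} [NeZero p] (σ : Fin n → ℝ) (hσ : ∀ t, 0 ≤ σ t)
    {Ω : Type} [MeasureSpace Ω] [IsProbabilityMeasure (ℙ : Measure Ω)]
    (ω : Fin n → Fin k → Ω → ℝ)
    (hmeas : ∀ t i, Measurable (ω t i))
    (hgauss : ∀ t i, Measure.map (ω t i) ℙ = gaussianReal 0 1)
    (hindep : iIndepFun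
      (fun ti : Fin n × Fin k => ω ti.1 ti.2) ℙ)
    (i j : Fin p → Fin k) (hi : StrictMono i) (hj : StrictMono j)
    (hdisj : ∀ a b, i a ≠ j b) :
    ∫ x, fTerm σ ω i j x ∂ℙ = (∑ t, σ t ^ (2 * p)) ^ 2 :=
  stmt9_general σ ω hmeas hgauss hindep i j hi hj hdisj
end

section
/- Let σ_1, …, σ_n be nonnegative reals and let ω_{t,i} (1 ≤ t ≤ n, 1 ≤ i ≤ k) be i.i.d. standard Gaussian N(0,1) random variables. If (i_1 < … < i_p) and (j_1 < … < j_p) are strictly increasing p-tuples in {1, …, k} whose index sets share exactly one common element (exactly one repeated index), then E[f_{i_1,…,j_p}] = (Σ_{t=1}^{n} σ_t^{2p})² + 2·Σ_{t=1}^{n} σ_t^{4p}, i.e., E[f_{i_1,…,j_p}] = ‖A‖_{2p}^{4p} + 2‖A‖_{4p}^{4p} when σ_1, …, σ_n are the singular values of a matrix A. -/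
/-!
Expanding the product, `E f` is a sum over pairs of maps `τ, ρ : Fin p → Fin n` of a weight
`∏ σ_{τ h}² σ_{ρ h}²` times a Gaussian moment `E ∏ ω_{r,c}^{e(r,c)}`, which factors by independence
into one-dimensional moments. In the factor coming from `i`, column `i_h` carries exactly
`ω_{τ h, i_h} ω_{τ (h-1), i_h}`; so if `τ h ≠ τ (h-1)` at an `h` with `i_h` outside `range j`,
the variable `ω_{τ h, i_h}` occurs exactly once and the term vanishes. Since only one `i_h` is
shared with `j` (call it `c₀`), a nonconstant cyclic `τ` always has such an `h`, and likewise for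
`ρ`. For constants `τ ≡ u`, `ρ ≡ v` every variable occurs squared, except `ω_{u,c₀}⁴` when `u = v`,
so the moment is `3` if `u = v` and `1` otherwise; summing `σ_u^{2p} σ_v^{2p} (1 + 2 [u = v])`
gives the result.
-/

open MeasureTheory ProbabilityTheory

open Real Finset Fin.NatCast
open scoped NNReal ENNReal

lemma integrable_pow_gaussianReal (μ : ℝ) (v : ℝ≥0) (q : ℕ) :
    Integrable (fun x : ℝ => x ^ q) (gaussianReal μ v) :=
  (memLp_id_gaussianReal (μ := μ) (v := v) q).integrable_norm_pow'.mono' (by fun_prop)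
    (ae_of_all _ fun x => by simp)

lemma hasDerivAt_gaussianPDFReal_zero (v : ℝ≥0) (x : ℝ) :
    HasDerivAt (gaussianPDFReal 0 v) (-(x / v) * gaussianPDFReal 0 v x) x := by
  have hpdf : gaussianPDFReal 0 v = fun y => (√(2 * π * v))⁻¹ * rexp (-y ^ 2 / (2 * v)) := by
    ext y
    simp [gaussianPDFReal]
  rw [hpdf]
  refine ((((hasDerivAt_pow 2 x).fun_neg.div_const (2 * v : ℝ)).exp).const_mul _).congr_deriv ?_
  rcases eq_or_ne (v : ℝ) 0 with hv | hv
  · simp [hv]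
  · field_simp
    ring

-- Stein's identity: integrate the derivative of `x ^ (q + 1) * v * φ(x)`, using `v φ' = -x φ`.
lemma integral_pow_add_two_gaussianReal (v : ℝ≥0) (q : ℕ) :
    ∫ x, x ^ (q + 2) ∂gaussianReal 0 v = (q + 1) * v * ∫ x, x ^ q ∂gaussianReal 0 v := by
  rcases eq_or_ne v 0 with rfl | hv
  · simp [gaussianReal_zero_var]
  have hint (m : ℕ) : Integrable (fun x => gaussianPDFReal 0 v x * x ^ m) := by
    have := integrable_pow_gaussianReal 0 v m
    rw [gaussianReal_of_var_ne_zero _ hv, integrable_withDensity_iff_integrable_smul'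
      (measurable_gaussianPDF _ _) (ae_of_all _ fun _ => gaussianPDF_lt_top)] at this
    simpa [gaussianPDF, gaussianPDFReal_nonneg] using this
  have hderiv (x : ℝ) : HasDerivAt (fun x => v * (gaussianPDFReal 0 v x * x ^ (q + 1)))
      ((q + 1) * v * (gaussianPDFReal 0 v x * x ^ q) - gaussianPDFReal 0 v x * x ^ (q + 2)) x := by
    refine (((hasDerivAt_gaussianPDFReal_zero v x).mul (hasDerivAt_pow (q + 1) x)).const_mul
      (v : ℝ)).congr_deriv ?_
    have : (v : ℝ) ≠ 0 := by exact_mod_cast hv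
    push_cast
    field_simp
    ring
  have hzero := integral_eq_zero_of_hasDerivAt_of_integrable hderiv
    (((hint q).const_mul _).sub (hint (q + 2))) ((hint (q + 1)).const_mul _)
  rw [integral_sub ((hint q).const_mul _) (hint (q + 2)), integral_const_mul] at hzero
  simp only [integral_gaussianReal_eq_integral_smul hv, smul_eq_mul]
  linarith

lemma integral_pow_ite_add_ite_gaussianReal (P Q : Prop) [Decidable P] [Decidable Q] :
    ∫ y, y ^ ((if P then 2 else 0) + (if Q then 2 else 0)) ∂gaussianReal 0 1 =
      if P ∧ Q then 3 else 1 := by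
  have h2 := integral_pow_add_two_gaussianReal 1 0
  have h4 := integral_pow_add_two_gaussianReal 1 2
  norm_num at h2 h4
  split_ifs <;> simp_all

lemma ProbabilityTheory.iIndepFun.integrable_fun_prod_s10 {Ω ι : Type*} [MeasurableSpace Ω]
    {μ : Measure Ω} [Fintype ι] {Y : ι → Ω → ℝ} (hY : iIndepFun Y μ)
    (hmeas : ∀ i, Measurable (Y i)) (hint : ∀ i, Integrable (Y i) μ) :
    Integrable (fun x => ∏ i, Y i x) μ := by
  refine ⟨(Finset.measurable_fun_prod _ fun i _ => hmeas i).aestronglyMeasurable, ?_⟩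
  have hindep : iIndepFun (fun i x => (‖Y i x‖₊ : ℝ≥0∞)) μ :=
    hY.comp _ fun _ => measurable_nnnorm.coe_nnreal_ennreal
  simp only [hasFiniteIntegral_iff_enorm, enorm_eq_nnnorm, nnnorm_prod,
    ENNReal.ofNNReal_finsetProd]
  rw [lintegral_prod_eq_prod_lintegral_of_indepFun _ _ hindep fun i =>
    (hmeas i).nnnorm.coe_nnreal_ennreal]
  exact ENNReal.prod_lt_top fun i _ => (hint i).2

section Words

variable {ι A : Type*} [Fintype ι] [DecidableEq ι] [Fintype A]

lemma prod_comp_eq_prod_pow_card_fiber {M : Type*} [CommMonoid M] (f : ι → M) (w : A → ι) :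
    ∏ a, f (w a) = ∏ b, f b ^ #{a | w a = b} := by
  rw [← Finset.prod_fiberwise' univ w (fun b => f b)]
  simp

omit [Fintype ι] in
lemma card_filter_sumElim {B : Type*} [Fintype B] (w₁ : A → ι) (w₂ : B → ι) (b : ι) :
    #{a | Sum.elim w₁ w₂ a = b} = #{a | w₁ a = b} + #{a | w₂ a = b} := by
  rw [card_filter, card_filter, card_filter, Fintype.sum_sum_type]
  rfl

lemma integrable_and_integral_prod_comp_of_iid_gaussian {Ω : Type*} [MeasureSpace Ω]
    {X : ι → Ω → ℝ} (hmeas : ∀ r, Measurable (X r))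
    (hgauss : ∀ r, (ℙ : Measure Ω).map (X r) = gaussianReal 0 1) (hindep : iIndepFun X ℙ)
    (w : A → ι) :
    Integrable (fun x => ∏ a, X (w a) x) ∧
      ∫ x, ∏ a, X (w a) x = ∏ b, ∫ y, y ^ #{a | w a = b} ∂gaussianReal 0 1 := by
  simp only [fun x => prod_comp_eq_prod_pow_card_fiber (fun b => X b x) w]
  have hpow (b : ι) (q : ℕ) : Integrable (fun x => X b x ^ q) ∧
      ∫ x, X b x ^ q = ∫ y, y ^ q ∂gaussianReal 0 1 := by
    rw [← hgauss b, integral_map (hmeas b).aemeasurable (by fun_prop)]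
    refine ⟨?_, rfl⟩
    have := integrable_pow_gaussianReal 0 1 q
    rwa [← hgauss b, integrable_map_measure (by fun_prop) (hmeas b).aemeasurable] at this
  refine ⟨(hindep.comp _ fun b => measurable_id.pow_const _).integrable_fun_prod_s10
    (fun b => (hmeas b).pow_const _) fun b => (hpow b _).1, ?_⟩
  rw [hindep.integral_fun_prod_comp (f := fun b y => y ^ #{a | w a = b})
    (fun b => (hmeas b).aemeasurable) fun b => by fun_prop]
  exact Finset.prod_congr rfl fun b _ => (hpow b _).2

end Words

lemma Fin.apply_eq_of_forall_ne_apply_sub_one {p : ℕ} [NeZero p] {α : Type*} {f : Fin p → α}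
    (h₀ : Fin p) (hf : ∀ h ≠ h₀, f h = f (h - 1)) (h : Fin p) : f h = f h₀ := by
  suffices ∀ m : ℕ, m < p → f (h₀ + (m : Fin p)) = f h₀ by
    simpa using this (h - h₀).val (h - h₀).isLt
  intro m
  induction m with
  | zero => simp
  | succ m ih =>
    intro hm
    have hne : h₀ + ((m + 1 : ℕ) : Fin p) ≠ h₀ := by
      rw [Ne, add_eq_left, Fin.natCast_eq_zero]
      exact Nat.not_dvd_of_pos_of_lt m.succ_pos hm
    rw [hf _ hne, Nat.cast_succ, ← add_assoc, add_sub_cancel_right]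
    exact ih (by omega)

lemma Fintype.sum_fun_eq_sum_const {α β M : Type*} [Fintype α] [DecidableEq α] [Nonempty α]
    [Fintype β] [AddCommMonoid M] (f : (α → β) → M)
    (hf : ∀ τ, (∀ u, τ ≠ fun _ => u) → f τ = 0) :
    ∑ τ, f τ = ∑ u, f (fun _ => u) := by
  classical
  rw [← sum_image (s := univ) (g := fun u : β => fun _ : α => u)
    fun u _ v _ huv => congrFun huv (Classical.arbitrary α)]
  refine (Finset.sum_subset (subset_univ _) fun τ _ hτ => hf τ fun u hu => hτ ?_).symm
  exact mem_image.2 ⟨u, mem_univ _, hu.symm⟩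

lemma sum_sum_mul_mul_ite_eq {ι R : Type*} [Fintype ι] [DecidableEq ι] [CommRing R] (a : ι → R) :
    ∑ u, ∑ v, a u * a v * (if u = v then 3 else 1) = (∑ u, a u) ^ 2 + 2 * ∑ u, a u ^ 2 := by
  rw [sq, sum_mul_sum, mul_sum]
  have (u v : ι) : a u * a v * (if u = v then 3 else 1) =
      a u * a v + (if u = v then 2 * a u * a v else 0) := by
    split_ifs <;> ring
  simp only [this, sum_add_distrib, sum_ite_eq, mem_univ, if_true, sq, mul_assoc]

section CycleWord

variable {p : ℕ} [NeZero p] {β γ : Type*} [DecidableEq β] [DecidableEq γ] {i j : Fin p → γ}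
  {c₀ : γ}

-- The indices `(t, c)` of the factors `ω_{t,c}` in the term of
-- `∏_h Σ_t σ_t² ω_{t, c h} ω_{t, c (h+1)}` that picks `t = τ h` in the `h`-th factor.
def cycleWord (c : Fin p → γ) (τ : Fin p → β) : Fin p ⊕ Fin p → β × γ :=
  Sum.elim (fun h => (τ h, c h)) (fun h => (τ h, c (h + 1)))

lemma card_cycleWord_of_notMem_range {c : Fin p → γ} (τ : Fin p → β) {r : β} {d : γ}
    (hd : d ∉ Set.range c) : #{a | cycleWord c τ a = (r, d)} = 0 := by
  rw [card_eq_zero, filter_eq_empty_iff]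
  rintro (h | h) - hh <;> simp only [cycleWord, Sum.elim_inl, Sum.elim_inr, Prod.mk.injEq] at hh
  exacts [hd ⟨h, hh.2⟩, hd ⟨h + 1, hh.2⟩]

lemma card_cycleWord_apply {c : Fin p → γ} (hc : Function.Injective c) (τ : Fin p → β)
    (r : β) (h : Fin p) :
    #{a | cycleWord c τ a = (r, c h)} =
      (if τ h = r then 1 else 0) + (if τ (h - 1) = r then 1 else 0) := by
  rw [card_filter, Fintype.sum_sum_type]
  simp only [cycleWord, Sum.elim_inl, Sum.elim_inr, Prod.mk.injEq, hc.eq_iff,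
    ← eq_sub_iff_add_eq]
  rw [Fintype.sum_eq_single h (by grind), Fintype.sum_eq_single (h - 1) (by grind)]
  simp

lemma card_cycleWord_const {c : Fin p → γ} (hc : Function.Injective c) (u r : β) (d : γ) :
    #{a | cycleWord c (fun _ => u) a = (r, d)} = if u = r ∧ d ∈ Set.range c then 2 else 0 := by
  by_cases hd : d ∈ Set.range c
  · obtain ⟨h, rfl⟩ := hd
    rw [card_cycleWord_apply hc]
    split_ifs <;> simp_all
  · rw [card_cycleWord_of_notMem_range _ hd, if_neg fun h => hd h.2]

lemma exists_card_cycleWord_eq_one {c : Fin p → γ} (hc : Function.Injective c) {τ : Fin p → β}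
    (hτ : ∀ u, τ ≠ fun _ => u) (h₀ : Fin p) :
    ∃ h ≠ h₀, #{a | cycleWord c τ a = (τ h, c h)} = 1 := by
  obtain ⟨h, hne, hjump⟩ : ∃ h ≠ h₀, τ h ≠ τ (h - 1) := by
    by_contra! hconst
    exact hτ (τ h₀) (funext (Fin.apply_eq_of_forall_ne_apply_sub_one h₀ hconst))
  exact ⟨h, hne, by simp [card_cycleWord_apply hc, Ne.symm hjump]⟩

lemma exists_card_cycleWord_eq_one_and_eq_zero (hi : Function.Injective i)
    (hij : Set.range i ∩ Set.range j = {c₀}) {τ : Fin p → β} (hτ : ∀ u, τ ≠ fun _ => u)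
    (ρ : Fin p → β) :
    ∃ b, #{a | cycleWord i τ a = b} = 1 ∧ #{a | cycleWord j ρ a = b} = 0 := by
  obtain ⟨h₀, hh₀⟩ : c₀ ∈ Set.range i := (hij.symm.subset rfl).1
  obtain ⟨h, hne, hone⟩ := exists_card_cycleWord_eq_one hi hτ h₀
  refine ⟨_, hone, card_cycleWord_of_notMem_range ρ fun hj => hne (hi ?_)⟩
  rw [hh₀, ← Set.mem_singleton_iff.mp (hij.subset ⟨⟨h, rfl⟩, hj⟩)]

lemma prod_integral_pow_cycleWord_eq_zero [Fintype β] [Fintype γ] (hi : Function.Injective i)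
    (hj : Function.Injective j) (hij : Set.range i ∩ Set.range j = {c₀}) {τ ρ : Fin p → β}
    (h : (∀ u, τ ≠ fun _ => u) ∨ (∀ v, ρ ≠ fun _ => v)) :
    ∏ b, ∫ y, y ^ #{a | Sum.elim (cycleWord i τ) (cycleWord j ρ) a = b} ∂gaussianReal 0 1 = 0 := by
  obtain ⟨b, hb⟩ : ∃ b, #{a | cycleWord i τ a = b} + #{a | cycleWord j ρ a = b} = 1 := by
    rcases h with hτ | hρ
    · obtain ⟨b, hone, hzero⟩ := exists_card_cycleWord_eq_one_and_eq_zero hi hij hτ ρ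
      exact ⟨b, by omega⟩
    · obtain ⟨b, hone, hzero⟩ :=
        exists_card_cycleWord_eq_one_and_eq_zero hj (by rwa [Set.inter_comm]) hρ τ
      exact ⟨b, by omega⟩
  exact prod_eq_zero (mem_univ b) (by simp [card_filter_sumElim, hb])

lemma prod_integral_pow_cycleWord_const [Fintype β] [Fintype γ] (hi : Function.Injective i)
    (hj : Function.Injective j) (hij : Set.range i ∩ Set.range j = {c₀}) (u v : β) :
    ∏ b, ∫ y, y ^ #{a | Sum.elim (cycleWord i fun _ => u) (cycleWord j fun _ => v) a = b}
      ∂gaussianReal 0 1 = if u = v then 3 else 1 := by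
  have hcond (r : β) (d : γ) : ((u = r ∧ d ∈ Set.range i) ∧ (v = r ∧ d ∈ Set.range j)) ↔
      (r, d) = (u, c₀) ∧ u = v := by
    have hd : d ∈ Set.range i ∧ d ∈ Set.range j ↔ d = c₀ := by
      simpa using Set.ext_iff.mp hij d
    aesop
  simp only [Fintype.prod_prod_type, card_filter_sumElim, card_cycleWord_const hi,
    card_cycleWord_const hj, integral_pow_ite_add_ite_gaussianReal, hcond]
  split_ifs with huv
  · subst huv
    simp [ite_and, prod_ite_eq']
  · simp [huv]

end CycleWord

section Expansion

variable {n k p : ℕ} [NeZero p] {Ω : Type} (σ : Fin n → ℝ) (ω : Fin n → Fin k → Ω → ℝ)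

lemma prod_sum_eq_sum_cycleWord (c : Fin p → Fin k) (x : Ω) :
    ∏ h, ∑ t, σ t ^ 2 * ω t (c h) x * ω t (c (h + 1)) x =
      ∑ τ, (∏ h, σ (τ h) ^ 2) * ∏ a, Function.uncurry ω (cycleWord c τ a) x := by
  rw [Fintype.prod_sum]
  refine sum_congr rfl fun τ _ => ?_
  simp [Fintype.prod_sum_type, cycleWord, prod_mul_distrib, mul_assoc]

lemma fTerm_eq_sum (i j : Fin p → Fin k) (x : Ω) :
    fTerm σ ω i j x = ∑ τ, ∑ ρ, ((∏ h, σ (τ h) ^ 2) * ∏ h, σ (ρ h) ^ 2) *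
      ∏ a, Function.uncurry ω (Sum.elim (cycleWord i τ) (cycleWord j ρ) a) x := by
  rw [fTerm, prod_mul_distrib, prod_sum_eq_sum_cycleWord, prod_sum_eq_sum_cycleWord, sum_mul_sum]
  simp [Fintype.prod_sum_type, mul_mul_mul_comm]

lemma integral_fTerm_eq_sum [MeasureSpace Ω] (hmeas : ∀ t c, Measurable (ω t c))
    (hgauss : ∀ t c, (ℙ : Measure Ω).map (ω t c) = gaussianReal 0 1)
    (hindep : iIndepFun (Function.uncurry ω) ℙ) (i j : Fin p → Fin k) :
    ∫ x, fTerm σ ω i j x ∂ℙ = ∑ τ, ∑ ρ, ((∏ h, σ (τ h) ^ 2) * ∏ h, σ (ρ h) ^ 2) *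
      ∏ b, ∫ y, y ^ #{a | Sum.elim (cycleWord i τ) (cycleWord j ρ) a = b} ∂gaussianReal 0 1 := by
  have hword (τ ρ : Fin p → Fin n) :=
    integrable_and_integral_prod_comp_of_iid_gaussian (X := Function.uncurry ω)
      (fun b => hmeas b.1 b.2) (fun b => hgauss b.1 b.2) hindep
      (Sum.elim (cycleWord i τ) (cycleWord j ρ))
  simp only [fTerm_eq_sum]
  rw [integral_finsetSum _ fun τ _ => integrable_finsetSum _ fun ρ _ =>
    (hword τ ρ).1.const_mul _]
  refine sum_congr rfl fun τ _ => ?_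
  rw [integral_finsetSum _ fun ρ _ => (hword τ ρ).1.const_mul _]
  exact sum_congr rfl fun ρ _ => by rw [integral_const_mul, (hword τ ρ).2]

end Expansion

theorem stmt10_general {n k p : ℕ} [NeZero p] (σ : Fin n → ℝ)
    {Ω : Type} [MeasureSpace Ω]
    (ω : Fin n → Fin k → Ω → ℝ)
    (hmeas : ∀ t i, Measurable (ω t i))
    (hgauss : ∀ t i, Measure.map (ω t i) ℙ = gaussianReal 0 1)
    (hindep : iIndepFun
      (fun ti : Fin n × Fin k => ω ti.1 ti.2) ℙ)
    (i j : Fin p → Fin k) (hi : StrictMono i) (hj : StrictMono j)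
    (hrep : (Set.range i ∩ Set.range j).ncard = 1) :
    ∫ x, fTerm σ ω i j x ∂ℙ
      = (∑ t, σ t ^ (2 * p)) ^ 2 + 2 * ∑ t, σ t ^ (4 * p) := by
  obtain ⟨c₀, hij⟩ := Set.ncard_eq_one.mp hrep
  rw [integral_fTerm_eq_sum σ ω hmeas hgauss hindep]
  calc _ = ∑ u, ∑ v, ((∏ _h : Fin p, σ u ^ 2) * ∏ _h : Fin p, σ v ^ 2) *
        ∏ b, ∫ y, y ^ #{a | Sum.elim (cycleWord i fun _ => u) (cycleWord j fun _ => v) a = b}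
          ∂gaussianReal 0 1 := by
        rw [Fintype.sum_fun_eq_sum_const _ fun τ hτ => sum_eq_zero fun ρ _ => by
          rw [prod_integral_pow_cycleWord_eq_zero hi.injective hj.injective hij (.inl hτ),
            mul_zero]]
        exact sum_congr rfl fun u _ => Fintype.sum_fun_eq_sum_const _ fun ρ hρ => by
          rw [prod_integral_pow_cycleWord_eq_zero hi.injective hj.injective hij (.inr hρ),
            mul_zero]
    _ = ∑ u, ∑ v, σ u ^ (2 * p) * σ v ^ (2 * p) * (if u = v then 3 else 1) := by
        simp [prod_integral_pow_cycleWord_const hi.injective hj.injective hij, pow_mul]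
    _ = _ := by
        simp_rw [sum_sum_mul_mul_ite_eq, ← pow_mul, show 2 * p * 2 = 4 * p by ring]

/-- If the index sets of the two strictly increasing `p`-tuples share
exactly one common element, then
`E[f_{i_1,…,j_p}] = (Σ_t σ_t^{2p})² + 2 Σ_t σ_t^{4p} = ‖A‖_{2p}^{4p} + 2‖A‖_{4p}^{4p}`. -/
theorem stmt10 {n k p : ℕ} [NeZero p] (σ : Fin n → ℝ) (hσ : ∀ t, 0 ≤ σ t)
    {Ω : Type} [MeasureSpace Ω] [IsProbabilityMeasure (ℙ : Measure Ω)]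
    (ω : Fin n → Fin k → Ω → ℝ)
    (hmeas : ∀ t i, Measurable (ω t i))
    (hgauss : ∀ t i, Measure.map (ω t i) ℙ = gaussianReal 0 1)
    (hindep : iIndepFun
      (fun ti : Fin n × Fin k => ω ti.1 ti.2) ℙ)
    (i j : Fin p → Fin k) (hi : StrictMono i) (hj : StrictMono j)
    (hrep : (Set.range i ∩ Set.range j).ncard = 1) :
    ∫ x, fTerm σ ω i j x ∂ℙ
      = (∑ t, σ t ^ (2 * p)) ^ 2 + 2 * ∑ t, σ t ^ (4 * p) :=
  stmt10_general σ ω hmeas hgauss hindep i j hi hj hrep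
end

section
/- Let p ≥ 1 be an integer. There exists a constant C ≥ 0 depending only on p such that for every integer k ≥ 2p, |C(k,p)^{-2}·C(k,2p−1)·C(2p−1,p)·p − p²/k + p²(p−1)²/k²| ≤ C/k³, where C(a,b) denotes the binomial coefficient. Equivalently, C(k,p)^{-2} C(k,2p−1) C(2p−1,p) p = (p²/k)·∏_{i=1}^{p−1}(1 − (p−1)/(k−i)) = p²/k − p²(p−1)²/k² + O(1/k³). -/
/-!
Writing `p = q + 1` and `k = n + 1`, the identity `C(k,2p-1) C(2p-1,p) = C(k,p) C(k-p,p-1)` and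
`k C(k-1,q) = p C(k,p)` turn the quantity into `(p²/k) ∏_{i<q} (1 - q/(n-i))`. Each factor is
`1 + x_i` with `|x_i| ≤ 2q/k` and `x_i = -q/k + O(q²/k²)`, and `∏ (1 + x_i)` differs from
`1 + ∑ x_i` by at most `(∑ |x_i|)² ∏ (1 + |x_i|)`, so the product is `1 - q²/k + O(1/k²)`.
-/

open Finset

theorem abs_prod_one_add_sub_one_sub_sum_le {ι : Type*} (s : Finset ι) (x : ι → ℝ) :
    |∏ i ∈ s, (1 + x i) - 1 - ∑ i ∈ s, x i| ≤
      (∑ i ∈ s, |x i|) ^ 2 * ∏ i ∈ s, (1 + |x i|) := by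
  classical
  induction s using Finset.induction with
  | empty => simp
  | @insert a s ha ih =>
    rw [prod_insert ha, sum_insert ha, sum_insert ha, prod_insert ha]
    set P := ∏ i ∈ s, (1 + x i)
    set S := ∑ i ∈ s, x i
    set A := ∑ i ∈ s, |x i|
    set B := ∏ i ∈ s, (1 + |x i|)
    have hA : 0 ≤ A := sum_nonneg fun i _ ↦ abs_nonneg _
    have hB : 1 ≤ B := one_le_prod fun i _ ↦ le_add_of_nonneg_right (abs_nonneg _)
    have hc : 0 ≤ |x a| := abs_nonneg _
    have hP : |P - 1| ≤ A ^ 2 * B + A := by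
      calc |P - 1| = |(P - 1 - S) + S| := by ring_nf
        _ ≤ |P - 1 - S| + |S| := abs_add_le _ _
        _ ≤ A ^ 2 * B + A := add_le_add ih (abs_sum_le_sum_abs _ _)
    calc |(1 + x a) * P - 1 - (x a + S)| = |(P - 1 - S) + x a * (P - 1)| := by ring_nf
      _ ≤ |P - 1 - S| + |x a| * |P - 1| := by rw [← abs_mul]; exact abs_add_le _ _
      _ ≤ A ^ 2 * B + |x a| * (A ^ 2 * B + A) := by gcongr
      _ ≤ (|x a| + A) ^ 2 * ((1 + |x a|) * B) := by
        nlinarith [mul_nonneg (mul_nonneg hc hA) (sub_nonneg.2 hB),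
          mul_nonneg (mul_nonneg hc hc) (mul_nonneg (add_nonneg hc hA) (by linarith : 0 ≤ B)),
          mul_nonneg (mul_nonneg hc hA) (mul_nonneg hA (by linarith : 0 ≤ B))]

theorem abs_prod_one_add_sub_one_add_card_mul_le {ι : Type*} (s : Finset ι) (x : ι → ℝ)
    {y a b : ℝ} (ha : ∀ i ∈ s, |x i| ≤ a) (hb : ∀ i ∈ s, |x i - y| ≤ b) :
    |∏ i ∈ s, (1 + x i) - (1 + #s * y)| ≤ (#s * a) ^ 2 * (1 + a) ^ #s + #s * b := by
  have hsum : ∑ i ∈ s, |x i| ≤ #s * a := by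
    simpa using sum_le_card_nsmul s _ a ha
  have hprod : ∏ i ∈ s, (1 + |x i|) ≤ (1 + a) ^ #s := by
    rw [← prod_const]
    exact prod_le_prod (fun i _ ↦ by positivity) fun i hi ↦ by linarith [ha i hi]
  have hdev : |∑ i ∈ s, x i - #s * y| ≤ #s * b := by
    calc |∑ i ∈ s, x i - #s * y| = |∑ i ∈ s, (x i - y)| := by simp [sum_sub_distrib]
      _ ≤ ∑ i ∈ s, |x i - y| := abs_sum_le_sum_abs _ _
      _ ≤ #s * b := by simpa using sum_le_card_nsmul s _ b hb
  calc |∏ i ∈ s, (1 + x i) - (1 + #s * y)|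
      = |(∏ i ∈ s, (1 + x i) - 1 - ∑ i ∈ s, x i) + (∑ i ∈ s, x i - #s * y)| := by ring_nf
    _ ≤ (∑ i ∈ s, |x i|) ^ 2 * ∏ i ∈ s, (1 + |x i|) + #s * b :=
      (abs_add_le _ _).trans (add_le_add (abs_prod_one_add_sub_one_sub_sum_le s x) hdev)
    _ ≤ (#s * a) ^ 2 * (1 + a) ^ #s + #s * b := by gcongr

theorem Nat.cast_descFactorial_eq_prod_range {R : Type*} [CommRing R] (n k : ℕ) :
    (n.descFactorial k : R) = ∏ i ∈ range k, ((n : R) - i) := by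
  rw [← descPochhammer_eval_eq_descFactorial, descPochhammer_eval_eq_prod_range]

theorem cast_choose_sub_div_cast_choose {n q : ℕ} (h : q ≤ n) :
    ((n - q).choose q : ℝ) / n.choose q = ∏ i ∈ range q, (1 - q / ((n : ℝ) - i)) := by
  have hfac : (q.factorial : ℝ) ≠ 0 := by positivity
  have hcast (m : ℕ) : (m.choose q : ℝ) = m.descFactorial q / q.factorial := by
    rw [Nat.descFactorial_eq_factorial_mul_choose]; push_cast; field_simp
  rw [hcast, hcast, div_div_div_cancel_right₀ hfac, Nat.cast_descFactorial_eq_prod_range,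
    Nat.cast_descFactorial_eq_prod_range, ← prod_div_distrib, Nat.cast_sub h]
  refine prod_congr rfl fun i hi ↦ ?_
  have : (n : ℝ) - i ≠ 0 := sub_ne_zero.2 (by exact_mod_cast ((mem_range.1 hi).trans_le h).ne')
  field_simp
  ring

theorem choose_sq_inv_mul_choose_mul_choose {n q : ℕ} (h : q ≤ n) :
    (((n + 1).choose (q + 1) : ℝ) ^ 2)⁻¹ * (n + 1).choose (2 * q + 1) *
        (2 * q + 1).choose (q + 1) * (q + 1 : ℕ) =
      ((q : ℝ) + 1) ^ 2 / (n + 1) * ∏ i ∈ range q, (1 - q / ((n : ℝ) - i)) := by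
  have hmul : ((n + 1).choose (2 * q + 1) : ℝ) * (2 * q + 1).choose (q + 1) =
      (n + 1).choose (q + 1) * (n - q).choose q := by
    have := Nat.choose_mul (n := n + 1) (by omega : q + 1 ≤ 2 * q + 1)
    rw [show n + 1 - (q + 1) = n - q by omega, show 2 * q + 1 - (q + 1) = q by omega] at this
    exact_mod_cast this
  have hsucc : ((n + 1).choose (q + 1) : ℝ) = (n + 1) * n.choose q / (q + 1) := by
    rw [eq_div_iff (by positivity)]; exact_mod_cast (Nat.add_one_mul_choose_eq n q).symm
  have hpos : (0 : ℝ) < n.choose q := by exact_mod_cast Nat.choose_pos h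
  rw [← cast_choose_sub_div_cast_choose h, mul_assoc _ _ ((2 * q + 1).choose (q + 1) : ℝ), hmul,
    hsucc]
  push_cast
  field_simp

theorem abs_prod_one_sub_div_sub_one_add_le {n q : ℕ} (h : 2 * q + 1 ≤ n) :
    |∏ i ∈ range q, (1 - q / ((n : ℝ) - i)) - 1 + (q : ℝ) ^ 2 / (n + 1)| ≤
      (4 * (q : ℝ) ^ 4 * 2 ^ q + 2 * (q : ℝ) ^ 3) / (n + 1) ^ 2 := by
  set K : ℝ := n + 1 with hKdef
  have hK : 2 * (q : ℝ) + 2 ≤ K := by rw [hKdef]; exact_mod_cast (by omega : 2 * q + 2 ≤ n + 1)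
  have hK0 : 0 < K := by positivity
  have hle (i : ℕ) (hi : i ∈ range q) : (i : ℝ) + 1 ≤ q := by
    exact_mod_cast mem_range.1 hi
  have hhalf (i : ℕ) (hi : i ∈ range q) : K / 2 ≤ n - i := by linarith [hle i hi]
  have ha (i : ℕ) (hi : i ∈ range q) : |-(q / ((n : ℝ) - i))| ≤ 2 * q / K := by
    have := hhalf i hi
    rw [abs_neg, abs_of_nonneg (div_nonneg (by positivity) (by linarith)),
      div_le_div_iff₀ (by linarith) hK0]
    nlinarith [(Nat.cast_nonneg q : (0 : ℝ) ≤ q)]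
  have hb (i : ℕ) (hi : i ∈ range q) :
      |-(q / ((n : ℝ) - i)) - -(q / K)| ≤ 2 * q ^ 2 / K ^ 2 := by
    have h1 := hhalf i hi
    have h2 := hle i hi
    have hd : (0 : ℝ) < n - i := by linarith
    have e : -(q / ((n : ℝ) - i)) - -(q / K) = -(q * (i + 1) / ((n - i) * K)) := by
      field_simp; ring
    rw [e, abs_neg, abs_of_nonneg (by positivity), div_le_div_iff₀ (by positivity) (by positivity)]
    have hq : (0 : ℝ) ≤ q := Nat.cast_nonneg q
    nlinarith [mul_le_mul h2 (by linarith : K ≤ 2 * (n - i)) hK0.le hq,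
      mul_nonneg hq hK0.le]
  have key := abs_prod_one_add_sub_one_add_card_mul_le (range q) _ ha hb
  simp only [← sub_eq_add_neg, card_range] at key
  have hpow : (1 + 2 * (q : ℝ) / K) ^ q ≤ 2 ^ q := by
    have : 2 * (q : ℝ) / K ≤ 1 := by rw [div_le_one hK0]; linarith
    gcongr
    linarith
  calc |∏ i ∈ range q, (1 - q / ((n : ℝ) - i)) - 1 + q ^ 2 / K|
      = |∏ i ∈ range q, (1 - q / ((n : ℝ) - i)) - (1 + q * -(q / K))| := by ring_nf
    _ ≤ (q * (2 * q / K)) ^ 2 * (1 + 2 * q / K) ^ q + q * (2 * q ^ 2 / K ^ 2) := key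
    _ ≤ (q * (2 * q / K)) ^ 2 * 2 ^ q + q * (2 * q ^ 2 / K ^ 2) := by gcongr
    _ = (4 * q ^ 4 * 2 ^ q + 2 * q ^ 3) / K ^ 2 := by field_simp; ring

/-- Second-order expansion of `C(k,p)⁻² C(k,2p−1) C(2p−1,p) p` in
`1/k`: there is a constant `C ≥ 0` depending only on `p` such that for all `k ≥ 2p`,
`|C(k,p)⁻² C(k,2p−1) C(2p−1,p) p − p²/k + p²(p−1)²/k²| ≤ C/k³`. -/
theorem stmt17 (p : ℕ) (hp : 1 ≤ p) :
    ∃ C : ℝ, 0 ≤ C ∧ ∀ k : ℕ, 2 * p ≤ k →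
      |((k.choose p : ℝ) ^ 2)⁻¹ * (k.choose (2 * p - 1) : ℝ) *
            ((2 * p - 1).choose p : ℝ) * (p : ℝ)
          - (p : ℝ) ^ 2 / k
          + (p : ℝ) ^ 2 * ((p : ℝ) - 1) ^ 2 / (k : ℝ) ^ 2|
        ≤ C / (k : ℝ) ^ 3 := by
  obtain ⟨q, rfl⟩ : ∃ q, p = q + 1 := ⟨p - 1, by omega⟩
  refine ⟨((q : ℝ) + 1) ^ 2 * (4 * q ^ 4 * 2 ^ q + 2 * q ^ 3), by positivity, fun k hk ↦ ?_⟩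
  obtain ⟨n, rfl⟩ : ∃ n, k = n + 1 := ⟨k - 1, by omega⟩
  rw [show 2 * (q + 1) - 1 = 2 * q + 1 by omega, choose_sq_inv_mul_choose_mul_choose (by omega)]
  set P := ∏ i ∈ range q, (1 - q / ((n : ℝ) - i))
  have hK : (0 : ℝ) < n + 1 := by positivity
  push_cast
  calc |((q : ℝ) + 1) ^ 2 / (n + 1) * P - (q + 1) ^ 2 / (n + 1) +
          (q + 1) ^ 2 * (q + 1 - 1) ^ 2 / (n + 1) ^ 2|
      = |((q : ℝ) + 1) ^ 2 / (n + 1) * (P - 1 + q ^ 2 / (n + 1))| := by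
        congr 1
        field_simp
        ring
    _ = ((q : ℝ) + 1) ^ 2 / (n + 1) * |P - 1 + q ^ 2 / (n + 1)| := by
        rw [abs_mul, abs_of_pos (by positivity)]
    _ ≤ ((q : ℝ) + 1) ^ 2 / (n + 1) * ((4 * q ^ 4 * 2 ^ q + 2 * q ^ 3) / (n + 1) ^ 2) := by
        gcongr
        exact abs_prod_one_sub_div_sub_one_add_le (n := n) (q := q) (by omega)
    _ = ((q : ℝ) + 1) ^ 2 * (4 * q ^ 4 * 2 ^ q + 2 * q ^ 3) / (n + 1) ^ 3 := by
        field_simp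
end

section
/- Let p ≥ 1 be an integer. There exists a constant C ≥ 0 depending only on p such that for every integer k ≥ 2p, |C(k,p)^{-2}·C(k,2p−2)·C(2p−2,p)·C(p,2) − p²(p−1)²/(2k²)| ≤ C/k³, where C(a,b) denotes the binomial coefficient. -/
/-!
Since `C(k, 2p-2) C(2p-2, p) = C(k, p) C(k-p, p-2)`, the quantity equals
`p²(p-1)²/2 · (k-p)_{p-2} / (k)_p`, with `(x)_n` the falling factorial. Both `k² (k-p)_{p-2}` and
`(k)_p` are products of `p` factors in `[0, k]` that differ factorwise by at most `p`, so they differ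
by at most `p² k^{p-1}`; together with `(k)_p ≥ (k/2)^p` this bounds the error by
`p²(p-1)²/2 · p² 2^p / k³`.
-/

open Finset Polynomial

theorem abs_prod_sub_prod_le {ι : Type*} {s : Finset ι} {x y : ι → ℝ} {M B : ℝ}
    (hx : ∀ i ∈ s, 0 ≤ x i ∧ x i ≤ M) (hy : ∀ i ∈ s, 0 ≤ y i ∧ y i ≤ M)
    (hxy : ∀ i ∈ s, |x i - y i| ≤ B) :
    |∏ i ∈ s, x i - ∏ i ∈ s, y i| ≤ #s * B * M ^ (#s - 1) := by
  classical
  induction s using Finset.induction_on with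
  | empty => simp
  | insert a s ha ih =>
    simp only [forall_mem_insert] at hx hy hxy
    have hM : 0 ≤ M := hx.1.1.trans hx.1.2
    have hQ0 : 0 ≤ ∏ i ∈ s, y i := prod_nonneg fun i hi => (hy.2 i hi).1
    have hQ : ∏ i ∈ s, y i ≤ M ^ #s :=
      (prod_le_prod (fun i hi => (hy.2 i hi).1) fun i hi => (hy.2 i hi).2).trans_eq (prod_const M)
    have hshift : M * (#s * B * M ^ (#s - 1)) = #s * B * M ^ #s := by
      rcases Nat.eq_zero_or_pos #s with h | h
      · simp [h]
      · rw [← mul_pow_sub_one h.ne' M]; ring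
    rw [prod_insert ha, prod_insert ha, card_insert_of_notMem ha, Nat.add_sub_cancel]
    calc |x a * ∏ i ∈ s, x i - y a * ∏ i ∈ s, y i|
        = |x a * (∏ i ∈ s, x i - ∏ i ∈ s, y i) + (x a - y a) * ∏ i ∈ s, y i| := by ring_nf
      _ ≤ M * (#s * B * M ^ (#s - 1)) + B * M ^ #s := by
        refine (abs_add_le _ _).trans (add_le_add ?_ ?_) <;> rw [abs_mul]
        · rw [abs_of_nonneg hx.1.1]
          exact mul_le_mul hx.1.2 (ih hx.2 hy.2 hxy.2) (abs_nonneg _) hM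
        · rw [abs_of_nonneg hQ0]
          exact mul_le_mul hxy.1 hQ hQ0 ((abs_nonneg _).trans hxy.1)
      _ = (#s + 1 : ℕ) * B * M ^ #s := by rw [hshift]; push_cast; ring

theorem abs_sq_mul_descPochhammer_sub_descPochhammer_le {p : ℕ} {r : ℝ} (hp : 2 ≤ p)
    (hr : 2 * p - 3 ≤ r) :
    |r ^ 2 * (descPochhammer ℝ (p - 2)).eval (r - p) - (descPochhammer ℝ p).eval r|
      ≤ p ^ 2 * r ^ (p - 1) := by
  obtain ⟨m, rfl⟩ := Nat.exists_eq_add_of_le' hp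
  -- pairs the factors `r, r` of `r ^ 2` with `r, r - 1`, and `r - p - j` with `r - 2 - j`
  set x : ℕ → ℝ := fun j => if j < 2 then r else r - (m + j)
  have hx : r ^ 2 * (descPochhammer ℝ m).eval (r - (m + 2 : ℕ)) = ∏ j ∈ range (m + 2), x j := by
    rw [descPochhammer_eval_eq_prod_range, add_comm m 2, prod_range_add]
    have h2 : ∏ j ∈ range 2, x j = r ^ 2 := by simp [x, prod_range_succ, sq]
    rw [h2]
    congr 1
    refine prod_congr rfl fun j _ => ?_
    simp only [x, show ¬ 2 + j < 2 by omega, if_false]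
    push_cast; ring
  push_cast at hr
  have hj : ∀ j ∈ range (m + 2), (j : ℝ) ≤ m + 1 := fun j hj => by
    exact_mod_cast Nat.le_of_lt_succ (mem_range.1 hj)
  rw [Nat.add_sub_cancel, hx, descPochhammer_eval_eq_prod_range]
  convert abs_prod_sub_prod_le (s := range (m + 2)) (M := r) (B := (m + 2 : ℕ))
    (fun j hj' => ?_) (fun j hj' => ?_) (fun j hj' => ?_) using 1
  · simp [sq]
  · have := hj j hj'
    by_cases h : j < 2 <;> simp only [x, h, if_true, if_false] <;> constructor <;> linarith
  · have := hj j hj'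
    constructor <;> linarith [(Nat.cast_nonneg j : (0:ℝ) ≤ j)]
  · by_cases h : j < 2
    · simp only [x, h, if_true, sub_sub_cancel, Nat.abs_cast]
      push_cast
      exact_mod_cast (by omega : j ≤ m + 2)
    · simp only [x, h, if_false, show r - (m + j) - (r - j) = -m by ring, abs_neg, Nat.abs_cast]
      push_cast; linarith

theorem inv_choose_sq_mul_choose_mul_choose_mul_choose_two_eq {p k : ℕ} (hp : 2 ≤ p)
    (hk : p ≤ k) :
    ((k.choose p : ℝ) ^ 2)⁻¹ * (k.choose (2 * p - 2) : ℝ) * ((2 * p - 2).choose p : ℝ)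
        * (p.choose 2 : ℝ)
      = (p : ℝ) ^ 2 * ((p : ℝ) - 1) ^ 2 / 2
        * ((descPochhammer ℝ (p - 2)).eval ((k : ℝ) - p) / (descPochhammer ℝ p).eval (k : ℝ)) := by
  have hmul : (k.choose (2 * p - 2) : ℝ) * ((2 * p - 2).choose p : ℝ)
      = k.choose p * (k - p).choose (p - 2) := by
    rw [show p - 2 = 2 * p - 2 - p by omega]; exact_mod_cast Nat.choose_mul (by omega)
  have hkp : (k.choose p : ℝ) ≠ 0 := by exact_mod_cast (Nat.choose_pos hk).ne'
  obtain ⟨m, rfl⟩ := Nat.exists_eq_add_of_le' hp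
  rw [mul_assoc _ (k.choose _ : ℝ), hmul, Nat.cast_choose_eq_descPochhammer_div ℝ k,
    Nat.cast_choose_eq_descPochhammer_div ℝ (k - (m + 2)), Nat.cast_sub hk,
    Nat.cast_choose_two, Nat.factorial_succ, Nat.factorial_succ]
  rw [Nat.cast_choose_eq_descPochhammer_div ℝ k] at hkp
  have hfac : (m.factorial : ℝ) ≠ 0 := by positivity
  field_simp
  push_cast
  ring

theorem stmt18_general (p : ℕ) :
    ∃ C : ℝ, 0 ≤ C ∧ ∀ k : ℕ, 2 * p ≤ k →
      |((k.choose p : ℝ) ^ 2)⁻¹ * (k.choose (2 * p - 2) : ℝ) *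
            ((2 * p - 2).choose p : ℝ) * (p.choose 2 : ℝ)
          - (p : ℝ) ^ 2 * ((p : ℝ) - 1) ^ 2 / (2 * (k : ℝ) ^ 2)|
        ≤ C / (k : ℝ) ^ 3 := by
  obtain hp1 | hp2 := lt_or_ge p 2
  · exact ⟨0, le_rfl, fun k _ => by interval_cases p <;> simp⟩
  set A : ℝ := (p : ℝ) ^ 2 * ((p : ℝ) - 1) ^ 2 / 2
  have hA : 0 ≤ A := by positivity
  refine ⟨A * (p ^ 2 * 2 ^ p), by positivity, fun k hk => ?_⟩
  rw [inv_choose_sq_mul_choose_mul_choose_mul_choose_two_eq hp2 (by omega)]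
  have hkR : 2 * (p : ℝ) ≤ k := by exact_mod_cast hk
  have hk0 : 0 < (k : ℝ) := by
    have : (2 : ℝ) ≤ p := by exact_mod_cast hp2
    linarith
  set N := (descPochhammer ℝ (p - 2)).eval ((k : ℝ) - p)
  set D := (descPochhammer ℝ p).eval (k : ℝ)
  have hD : ((k : ℝ) / 2) ^ p ≤ D :=
    (pow_le_pow_left₀ (by positivity) (by linarith) p).trans
      (pow_le_descPochhammer_eval (by linarith))
  have hD0 : 0 < D := lt_of_lt_of_le (by positivity) hD
  have hnum : |(k : ℝ) ^ 2 * N - D| ≤ p ^ 2 * (k : ℝ) ^ (p - 1) :=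
    abs_sq_mul_descPochhammer_sub_descPochhammer_le hp2 (by linarith)
  calc _ = A * (|(k : ℝ) ^ 2 * N - D| / ((k : ℝ) ^ 2 * D)) := by
        rw [← abs_of_nonneg hA, ← abs_of_pos (by positivity : 0 < (k : ℝ) ^ 2 * D), ← abs_div,
          ← abs_mul]
        congr 1
        field_simp
        simp only [A]
        ring
    _ ≤ A * (p ^ 2 * (k : ℝ) ^ (p - 1) / ((k : ℝ) ^ 2 * ((k : ℝ) / 2) ^ p)) := by gcongr
    _ = A * (p ^ 2 * 2 ^ p) / (k : ℝ) ^ 3 := by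
        rw [div_pow, ← mul_pow_sub_one (by omega : p ≠ 0) (k : ℝ)]
        field_simp

/-- Second-order expansion of `C(k,p)⁻² C(k,2p−2) C(2p−2,p) C(p,2)` in
`1/k`: there is a constant `C ≥ 0` depending only on `p` such that for all `k ≥ 2p`,
`|C(k,p)⁻² C(k,2p−2) C(2p−2,p) C(p,2) − p²(p−1)²/(2k²)| ≤ C/k³`. -/
theorem stmt18 (p : ℕ) (hp : 1 ≤ p) :
    ∃ C : ℝ, 0 ≤ C ∧ ∀ k : ℕ, 2 * p ≤ k →
      |((k.choose p : ℝ) ^ 2)⁻¹ * (k.choose (2 * p - 2) : ℝ) *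
            ((2 * p - 2).choose p : ℝ) * (p.choose 2 : ℝ)
          - (p : ℝ) ^ 2 * ((p : ℝ) - 1) ^ 2 / (2 * (k : ℝ) ^ 2)|
        ≤ C / (k : ℝ) ^ 3 :=
  stmt18_general p
end
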